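/- arXiv:0908.4003 — 5 statements merged into one kernel-verified Lean document; each statement's English description precedes it below -/
import Mathlib

section
/- Let s_n be the number of canonical secondary structures on [1,n] (with θ = 1, and s_0 = 0), and let r_n be the number of secondary structures T on [1,n] (with θ = 1, r_0 = 0) such that the structure obtained from T by adding one enclosing base pair (shifting T up by one and adding the pair (1, n+2)) is canonical. Then the formal power series S(z) = Σ_{n≥1} s_n z^n and R(z) = Σ_{n≥1} r_n z^n in ℚ[[z]] satisfy the system S = z + zS + z²R + z²SR and R = z³ + z²R + z⁴SR + z³S. -/
/-- A secondary structure on `[1,n]` with `θ = 1`: a finite set of base pairs `(i,j)`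
with `1 ≤ i`, `i + 1 < j` (i.e. `i < j` and `j - i > 1`), `j ≤ n`, no shared endpoints,
and no crossings (pseudoknots). -/
def IsSecStr (n : ℕ) (S : Finset (ℕ × ℕ)) : Prop :=
  (∀ p ∈ S, 1 ≤ p.1 ∧ p.1 + 1 < p.2 ∧ p.2 ≤ n) ∧
  (∀ p ∈ S, ∀ q ∈ S, p ≠ q →
    p.1 ≠ q.1 ∧ p.1 ≠ q.2 ∧ p.2 ≠ q.1 ∧ p.2 ≠ q.2) ∧
  (∀ p ∈ S, ∀ q ∈ S, ¬ (p.1 < q.1 ∧ q.1 < p.2 ∧ p.2 < q.2))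

/-- A secondary structure is canonical if it has no lonely base pairs. -/
def IsCanonical (S : Finset (ℕ × ℕ)) : Prop :=
  ∀ p ∈ S, (p.1 - 1, p.2 + 1) ∈ S ∨ (p.1 + 1, p.2 - 1) ∈ S

/-- The number of canonical secondary structures on `[1,n]` (θ = 1). -/
noncomputable def numCanonical (n : ℕ) : ℕ :=
  Set.ncard {S : Finset (ℕ × ℕ) | IsSecStr n S ∧ IsCanonical S}

/-- The structure obtained from `T` on `[1,n]` by adding one enclosing base pair. -/
def enclose (n : ℕ) (T : Finset (ℕ × ℕ)) : Finset (ℕ × ℕ) :=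
  insert (1, n + 2) (T.image fun p => (p.1 + 1, p.2 + 1))

/-- The number of secondary structures `T` on `[1,n]` such that the structure obtained
from `T` by adding one enclosing base pair is canonical. -/
noncomputable def numPreCanonical (n : ℕ) : ℕ :=
  Set.ncard {T : Finset (ℕ × ℕ) | IsSecStr n T ∧ IsCanonical (enclose n T)}

/-- `S(z) = Σ_{n≥1} s_n zⁿ`, with `s_n` the number of canonical structures on `[1,n]`. -/
noncomputable def canonGF : PowerSeries ℚ :=
  PowerSeries.mk fun n => if n = 0 then 0 else (numCanonical n : ℚ)

/-- `R(z) = Σ_{n≥1} r_n zⁿ`, with `r_n` the number of structures on `[1,n]` that become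
canonical after adding one enclosing base pair. -/
noncomputable def canonRGF : PowerSeries ℚ :=
  PowerSeries.mk fun n => if n = 0 then 0 else (numPreCanonical n : ℚ)

/-!
Classify a canonical structure on `[1,n]` by the first base. Either `1` is unpaired, leaving a
canonical structure on `[2,n]`, or `1` pairs with some `j`: the pairs inside `(1,j)` then form a
structure on `[2,j-1]` whose enclosure by `(1,j)` is canonical, and the pairs right of `j` an
arbitrary canonical structure on `[j+1,n]`. With `C = 1 + S` counting the empty structure too,
this reads `C = 1 + zC + z²RC`.

A structure `T` counted by `r_n` is exactly one that contains `(1,n)` and is canonical except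
possibly at `(1,n)`. Removing `(1,n)` leaves a structure on `[1,n-2]` canonical except possibly at
`(1,n-2)`; those containing `(1,n-2)` are counted by `r_{n-2}`, the others are the canonical
structures avoiding `(1,n-2)`, counted by `s_{n-2} - r_{n-4}`. Hence `R + z⁴R = z²R + z²S`, and
the stated system is a linear combination of the two relations.
-/

open Finset

def pairShift (k : ℕ) : ℕ × ℕ ↪ ℕ × ℕ :=
  (addRightEmbedding k).prodMap (addRightEmbedding k)

@[simp]
lemma pairShift_apply (k : ℕ) (p : ℕ × ℕ) : pairShift k p = (p.1 + k, p.2 + k) := rfl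

def shiftStr (k : ℕ) (S : Finset (ℕ × ℕ)) : Finset (ℕ × ℕ) :=
  S.map (pairShift k)

lemma mem_shiftStr {k : ℕ} {S : Finset (ℕ × ℕ)} {q : ℕ × ℕ} :
    q ∈ shiftStr k S ↔ ∃ p ∈ S, (p.1 + k, p.2 + k) = q :=
  mem_map

lemma shiftStr_injective (k : ℕ) : Function.Injective (shiftStr k) :=
  map_injective _

lemma enclose_eq_insert_shiftStr (n : ℕ) (T : Finset (ℕ × ℕ)) :
    enclose n T = insert (1, n + 2) (shiftStr 1 T) := by
  rw [enclose, shiftStr, map_eq_image]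
  rfl

section

variable {m n k : ℕ} {S T V W : Finset (ℕ × ℕ)}

lemma IsSecStr.of_subset (hS : IsSecStr n S) (hTS : T ⊆ S) (hT : ∀ p ∈ T, p.2 ≤ m) :
    IsSecStr m T :=
  ⟨fun p hp => ⟨(hS.1 p (hTS hp)).1, (hS.1 p (hTS hp)).2.1, hT p hp⟩,
    fun p hp q hq => hS.2.1 p (hTS hp) q (hTS hq),
    fun p hp q hq => hS.2.2 p (hTS hp) q (hTS hq)⟩

lemma IsSecStr.mono (hS : IsSecStr m S) (hmn : m ≤ n) : IsSecStr n S :=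
  hS.of_subset subset_rfl fun p hp => (hS.1 p hp).2.2.trans hmn

lemma IsSecStr.eq_empty (hS : IsSecStr n S) (hn : n < 3) : S = ∅ :=
  eq_empty_of_forall_notMem fun p hp => by have := hS.1 p hp; omega

lemma isSecStr_shiftStr (hS : IsSecStr n S) : IsSecStr (n + k) (shiftStr k S) := by
  obtain ⟨hb, hd, hc⟩ := hS
  simp only [IsSecStr, shiftStr, forall_mem_map, pairShift_apply]
  refine ⟨fun p hp => ?_, fun p hp q hq hpq => ?_, fun p hp q hq => ?_⟩
  · have := hb p hp; omega
  · have := hd p hp q hq (by rintro rfl; exact hpq rfl); omega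
  · have := hc p hp q hq; omega

lemma IsSecStr.exists_eq_shiftStr (hS : IsSecStr n S) (hk : ∀ p ∈ S, k < p.1) :
    ∃ W, IsSecStr (n - k) W ∧ S = shiftStr k W := by
  obtain ⟨hb, hd, hc⟩ := hS
  refine ⟨S.image fun p => (p.1 - k, p.2 - k), ⟨?_, ?_, ?_⟩, ?_⟩
  · simp only [mem_image]
    rintro _ ⟨p, hp, rfl⟩
    have := hb p hp; have := hk p hp; omega
  · simp only [mem_image]
    rintro _ ⟨p, hp, rfl⟩ _ ⟨q, hq, rfl⟩ hpq
    have := hd p hp q hq (by rintro rfl; exact hpq rfl)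
    have := hb p hp; have := hb q hq; have := hk p hp; have := hk q hq
    omega
  · simp only [mem_image]
    rintro _ ⟨p, hp, rfl⟩ _ ⟨q, hq, rfl⟩
    have := hc p hp q hq; have := hb p hp; have := hb q hq; have := hk p hp; have := hk q hq
    omega
  · ext q
    simp only [mem_shiftStr, mem_image]
    constructor
    · intro hq
      have := hk q hq; have := hb q hq
      exact ⟨_, ⟨q, hq, rfl⟩, by ext <;> simp <;> omega⟩
    · rintro ⟨_, ⟨p, hp, rfl⟩, rfl⟩
      have := hk p hp; have := hb p hp
      convert hp using 1
      ext <;> simp <;> omega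

lemma IsSecStr.inside_or_right {j : ℕ} {p : ℕ × ℕ} (hS : IsSecStr n S) (hj : (1, j) ∈ S)
    (hp : p ∈ S) (hpj : p ≠ (1, j)) : (1 < p.1 ∧ p.2 < j) ∨ j < p.1 := by
  have := hS.1 p hp
  have := hS.2.1 p hp _ hj hpj
  have := hS.2.2 _ hj p hp
  omega

lemma isSecStr_enclose (hW : IsSecStr m W) (hm : 1 ≤ m) : IsSecStr (m + 2) (enclose m W) := by
  obtain ⟨hb, hd, hc⟩ := hW
  simp only [IsSecStr, enclose_eq_insert_shiftStr, shiftStr, forall_mem_insert, forall_mem_map,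
    pairShift_apply]
  refine ⟨⟨by omega, fun p hp => ?_⟩, ⟨⟨by simp, fun p hp _ => ?_⟩,
    fun p hp => ⟨fun _ => ?_, fun q hq hpq => ?_⟩⟩, ⟨⟨by simp, fun p hp => ?_⟩,
    fun p hp => ⟨?_, fun q hq => ?_⟩⟩⟩
  · have := hb p hp; omega
  · have := hb p hp; omega
  · have := hb p hp; omega
  · have := hd p hp q hq (by rintro rfl; exact hpq rfl); omega
  · have := hb p hp; omega
  · have := hb p hp; omega
  · have := hc p hp q hq; omega

lemma lt_of_mem_shiftStr {p : ℕ × ℕ} (hS : IsSecStr n S) (hp : p ∈ shiftStr k S) : k < p.1 := by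
  obtain ⟨q, hq, rfl⟩ := mem_shiftStr.1 hp
  have := hS.1 q hq
  simp only
  omega

lemma le_of_mem_enclose {p : ℕ × ℕ} (hT : IsSecStr n T) (hp : p ∈ enclose n T) : p.2 ≤ n + 2 := by
  rcases mem_insert.1 ((enclose_eq_insert_shiftStr n T) ▸ hp) with rfl | hp
  · exact le_rfl
  · have := (isSecStr_shiftStr (k := 1) hT).1 p hp
    omega

lemma IsSecStr.exists_eq_enclose (hT : IsSecStr n T) (h1 : (1, n) ∈ T) :
    ∃ W, IsSecStr (n - 2) W ∧ T = enclose (n - 2) W := by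
  have hn : 3 ≤ n := by have := hT.1 _ h1; simp only at this; omega
  have hin : ∀ p ∈ T.erase (1, n), 1 < p.1 ∧ p.2 ≤ n - 1 := by
    intro p hp
    obtain ⟨hpn, hp⟩ := mem_erase.1 hp
    have := hT.1 p hp
    rcases hT.inside_or_right h1 hp hpn with h | h <;> omega
  obtain ⟨W, hW, hTW⟩ := (hT.of_subset (erase_subset _ _) fun p hp => (hin p hp).2)
    |>.exists_eq_shiftStr fun p hp => (hin p hp).1
  refine ⟨W, by rwa [Nat.sub_sub] at hW, ?_⟩
  rw [enclose_eq_insert_shiftStr, ← hTW, show n - 2 + 2 = n by omega, insert_erase h1]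

lemma enclose_inj (hV : IsSecStr m V) (hW : IsSecStr m W) :
    enclose m V = enclose m W ↔ V = W := by
  have hout : ∀ {U}, IsSecStr m U → (1, m + 2) ∉ shiftStr 1 U := fun hU h => by
    have := lt_of_mem_shiftStr hU h
    simp at this
  refine ⟨fun h => shiftStr_injective 1 ?_, fun h => h ▸ rfl⟩
  rw [← erase_insert (hout hV), ← erase_insert (hout hW), ← enclose_eq_insert_shiftStr,
    ← enclose_eq_insert_shiftStr, h]

lemma isSecStr_union (hS : IsSecStr m S) (hT : IsSecStr n T) (hmn : m ≤ n)
    (hST : ∀ p ∈ T, m < p.1) : IsSecStr n (S ∪ T) := by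
  obtain ⟨hbS, hdS, hcS⟩ := hS
  obtain ⟨hbT, hdT, hcT⟩ := hT
  simp only [IsSecStr, forall_mem_union]
  refine ⟨⟨fun p hp => ?_, hbT⟩, ⟨fun p hp => ⟨hdS p hp, fun q hq _ => ?_⟩,
    fun p hp => ⟨fun q hq _ => ?_, hdT p hp⟩⟩, ⟨fun p hp => ⟨hcS p hp, fun q hq => ?_⟩,
    fun p hp => ⟨fun q hq => ?_, hcT p hp⟩⟩⟩
  · have := hbS p hp; omega
  · have := hbS p hp; have := hbT q hq; have := hST q hq; omega
  · have := hbS q hq; have := hbT p hp; have := hST p hp; omega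
  · have := hbS p hp; have := hbT q hq; have := hST q hq; omega
  · have := hbS q hq; have := hbT p hp; have := hST p hp; omega

def IsStacked (S : Finset (ℕ × ℕ)) (p : ℕ × ℕ) : Prop :=
  (p.1 - 1, p.2 + 1) ∈ S ∨ (p.1 + 1, p.2 - 1) ∈ S

lemma isCanonical_iff_forall_isStacked : IsCanonical S ↔ ∀ p ∈ S, IsStacked S p :=
  Iff.rfl

def IsCanonicalExcept (q : ℕ × ℕ) (S : Finset (ℕ × ℕ)) : Prop :=
  ∀ p ∈ S, p ≠ q → IsStacked S p

lemma IsCanonical.union (hS : IsCanonical S) (hT : IsCanonical T) : IsCanonical (S ∪ T) :=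
  fun p hp => (mem_union.1 hp).elim
    (fun h => (hS p h).imp (mem_union_left _) (mem_union_left _))
    (fun h => (hT p h).imp (mem_union_right _) (mem_union_right _))

lemma IsCanonical.filter (hS : IsCanonical S) (P : ℕ × ℕ → Prop) [DecidablePred P]
    (hP : ∀ p ∈ S, ∀ q ∈ S, (q = (p.1 - 1, p.2 + 1) ∨ q = (p.1 + 1, p.2 - 1)) → (P q ↔ P p)) :
    IsCanonical (S.filter P) := by
  intro p hp
  obtain ⟨hpS, hPp⟩ := mem_filter.1 hp
  exact (hS p hpS).imp (fun h => mem_filter.2 ⟨h, (hP p hpS _ h (.inl rfl)).2 hPp⟩)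
    (fun h => mem_filter.2 ⟨h, (hP p hpS _ h (.inr rfl)).2 hPp⟩)

lemma pairShift_outer {p : ℕ × ℕ} (hp : 1 ≤ p.1) :
    ((pairShift k p).1 - 1, (pairShift k p).2 + 1) = pairShift k (p.1 - 1, p.2 + 1) := by
  ext <;> simp <;> omega

lemma pairShift_inner {p : ℕ × ℕ} (hp : 1 ≤ p.2) :
    ((pairShift k p).1 + 1, (pairShift k p).2 - 1) = pairShift k (p.1 + 1, p.2 - 1) := by
  ext <;> simp <;> omega

lemma isStacked_shiftStr_iff {p : ℕ × ℕ} (hp1 : 1 ≤ p.1) (hp2 : 1 ≤ p.2) :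
    IsStacked (shiftStr k S) (pairShift k p) ↔ IsStacked S p := by
  rw [IsStacked, IsStacked, pairShift_outer hp1, pairShift_inner hp2, shiftStr, mem_map', mem_map']

lemma isStacked_enclose_outer : IsStacked (enclose n T) (1, n + 2) ↔ (1, n) ∈ T := by
  have h0 : (0, n + 3) ∉ enclose n T := by simp [enclose]
  have h2 : (2, n + 1) ∈ enclose n T ↔ (1, n) ∈ T := by
    rw [enclose_eq_insert_shiftStr, mem_insert, shiftStr,
      show ((2, n + 1) : ℕ × ℕ) = pairShift 1 (1, n) from rfl, mem_map']
    simp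
  simp [IsStacked, h0, h2]

lemma isStacked_enclose_pairShift {p : ℕ × ℕ} (hp1 : 1 ≤ p.1) (hp2 : 1 ≤ p.2) :
    IsStacked (enclose n T) (pairShift 1 p) ↔ p = (1, n) ∨ IsStacked T p := by
  have e1 : pairShift 1 (p.1 - 1, p.2 + 1) = (1, n + 2) ↔ p = (1, n) := by
    simp only [pairShift_apply, Prod.ext_iff]; omega
  have e2 : pairShift 1 (p.1 + 1, p.2 - 1) ≠ (1, n + 2) := by simp
  rw [IsStacked, enclose_eq_insert_shiftStr, mem_insert, mem_insert, pairShift_outer hp1,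
    pairShift_inner hp2, shiftStr, mem_map', mem_map', e1, IsStacked]
  simp only [e2, false_or, or_assoc]

lemma isCanonical_shiftStr_iff (hS : IsSecStr n S) :
    IsCanonical (shiftStr k S) ↔ IsCanonical S := by
  rw [isCanonical_iff_forall_isStacked, isCanonical_iff_forall_isStacked, shiftStr,
    forall_mem_map]
  exact forall₂_congr fun p hp => isStacked_shiftStr_iff (hS.1 p hp).1 (by have := hS.1 p hp; omega)

lemma isCanonical_enclose_iff (hT : IsSecStr n T) :
    IsCanonical (enclose n T) ↔ (1, n) ∈ T ∧ IsCanonicalExcept (1, n) T := by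
  rw [isCanonical_iff_forall_isStacked, enclose_eq_insert_shiftStr, forall_mem_insert,
    ← enclose_eq_insert_shiftStr, isStacked_enclose_outer, shiftStr, forall_mem_map]
  refine and_congr Iff.rfl (forall₂_congr fun p hp => ?_)
  have := hT.1 p hp
  rw [isStacked_enclose_pairShift (by omega) (by omega), or_iff_not_imp_left]

lemma isCanonicalExcept_enclose_iff (hT : IsSecStr n T) :
    IsCanonicalExcept (1, n + 2) (enclose n T) ↔ IsCanonicalExcept (1, n) T := by
  unfold IsCanonicalExcept
  rw [enclose_eq_insert_shiftStr, forall_mem_insert, ← enclose_eq_insert_shiftStr, shiftStr,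
    forall_mem_map]
  simp only [ne_eq, not_true_eq_false, IsEmpty.forall_iff, true_and]
  refine forall₂_congr fun p hp => ?_
  have := hT.1 p hp
  have hne : pairShift 1 p ≠ (1, n + 2) := by
    simp only [pairShift_apply, ne_eq, Prod.mk.injEq]; omega
  rw [isStacked_enclose_pairShift (by omega) (by omega), or_iff_not_imp_left]
  simp only [hne, not_false_eq_true, forall_const]

lemma IsSecStr.le_iff_of_stacked {j : ℕ} (hS : IsSecStr n S) (hj : (1, j) ∈ S) :
    ∀ p ∈ S, ∀ q ∈ S, (q = (p.1 - 1, p.2 + 1) ∨ q = (p.1 + 1, p.2 - 1)) →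
      (q.2 ≤ j ↔ p.2 ≤ j) := by
  intro p hp q hq hpq
  have := hS.1 p hp
  have := hS.1 q hq
  by_cases hpj : p = (1, j)
  · subst hpj
    rcases hpq with rfl | rfl <;> simp only at * <;> omega
  · rcases hS.inside_or_right hj hp hpj with h | h <;> rcases hpq with rfl | rfl <;>
      simp only at * <;> omega

lemma IsSecStr.exists_eq_enclose_union {i : ℕ} (hS : IsSecStr (i + 2 + k) S)
    (hc : IsCanonical S) (hi : (1, i + 2) ∈ S) :
    ∃ V W, (IsSecStr i V ∧ IsCanonical (enclose i V)) ∧ (IsSecStr k W ∧ IsCanonical W) ∧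
      S = enclose i V ∪ shiftStr (i + 2) W := by
  have hside := hS.le_iff_of_stacked hi
  obtain ⟨V, hV, hPV⟩ := (hS.of_subset (filter_subset (·.2 ≤ i + 2) S) fun p hp =>
    (mem_filter.1 hp).2).exists_eq_enclose (mem_filter.2 ⟨hi, le_rfl⟩)
  have hright : ∀ p ∈ S.filter (¬ ·.2 ≤ i + 2), i + 2 < p.1 := by
    intro p hp
    obtain ⟨hpS, hp⟩ := mem_filter.1 hp
    have hpi : p ≠ (1, i + 2) := by rintro rfl; exact hp le_rfl
    rcases hS.inside_or_right hi hpS hpi with h | h <;> omega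
  obtain ⟨W, hW, hQW⟩ := (hS.of_subset (filter_subset _ S) fun p hp =>
    (hS.1 p (mem_filter.1 hp).1).2.2).exists_eq_shiftStr hright
  rw [Nat.add_sub_cancel] at hV hPV
  rw [Nat.add_sub_cancel_left] at hW
  refine ⟨V, W, ⟨hV, hPV ▸ hc.filter _ hside⟩, ⟨hW, ?_⟩, ?_⟩
  · exact (isCanonical_shiftStr_iff hW).1 (hQW ▸ hc.filter _ fun p hp q hq hpq =>
      not_congr (hside p hp q hq hpq))
  · rw [← hPV, ← hQW, filter_union_filter_not_eq]

lemma enclose_union_shiftStr_inj {i : ℕ} {V' W' : Finset (ℕ × ℕ)} (hV : IsSecStr i V)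
    (hV' : IsSecStr i V') (hW : IsSecStr k W) (hW' : IsSecStr k W')
    (h : enclose i V ∪ shiftStr (i + 2) W = enclose i V' ∪ shiftStr (i + 2) W') :
    V = V' ∧ W = W' := by
  have parts : ∀ {V W}, IsSecStr i V → IsSecStr k W →
      (enclose i V ∪ shiftStr (i + 2) W).filter (·.2 ≤ i + 2) = enclose i V ∧
      (enclose i V ∪ shiftStr (i + 2) W).filter (¬ ·.2 ≤ i + 2) = shiftStr (i + 2) W := by
    intro V W hV hW
    have hleft := fun p hp => le_of_mem_enclose (p := p) hV hp
    have hright : ∀ p ∈ shiftStr (i + 2) W, ¬ p.2 ≤ i + 2 := fun p hp => by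
      have := lt_of_mem_shiftStr hW hp
      have := (isSecStr_shiftStr (k := i + 2) hW).1 p hp
      omega
    rw [filter_union, filter_union, filter_true_of_mem hleft, filter_false_of_mem hright,
      filter_false_of_mem fun p hp => not_not.2 (hleft p hp), filter_true_of_mem hright,
      union_empty, empty_union]
    exact ⟨rfl, rfl⟩
  exact ⟨(enclose_inj hV hV').1 <| by rw [← (parts hV hW).1, h, (parts hV' hW').1],
    shiftStr_injective _ <| by rw [← (parts hV hW).2, h, (parts hV' hW').2]⟩

section Counting

open Classical

noncomputable def secStrs (n : ℕ) : Finset (Finset (ℕ × ℕ)) :=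
  (Icc 1 n ×ˢ Icc 1 n).powerset.filter (IsSecStr n)

noncomputable def canonicalStrs (n : ℕ) : Finset (Finset (ℕ × ℕ)) :=
  (secStrs n).filter IsCanonical

noncomputable def preCanonicalStrs (n : ℕ) : Finset (Finset (ℕ × ℕ)) :=
  (secStrs n).filter fun T => IsCanonical (enclose n T)

lemma mem_secStrs : S ∈ secStrs n ↔ IsSecStr n S := by
  simp only [secStrs, mem_filter, mem_powerset, and_iff_right_iff_imp]
  intro hS p hp
  have := hS.1 p hp
  simp only [mem_product, mem_Icc]
  omega

lemma mem_canonicalStrs : S ∈ canonicalStrs n ↔ IsSecStr n S ∧ IsCanonical S := by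
  rw [canonicalStrs, mem_filter, mem_secStrs]

lemma mem_preCanonicalStrs :
    T ∈ preCanonicalStrs n ↔ IsSecStr n T ∧ IsCanonical (enclose n T) := by
  rw [preCanonicalStrs, mem_filter, mem_secStrs]

lemma numCanonical_eq_card (n : ℕ) : numCanonical n = #(canonicalStrs n) := by
  rw [numCanonical, ← Set.ncard_coe_finset]
  congr
  ext S
  simp [mem_canonicalStrs]

lemma numPreCanonical_eq_card (n : ℕ) : numPreCanonical n = #(preCanonicalStrs n) := by
  rw [numPreCanonical, ← Set.ncard_coe_finset]
  congr
  ext S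
  simp [mem_preCanonicalStrs]

lemma card_canonicalStrs_of_lt_three (hn : n < 3) : #(canonicalStrs n) = 1 := by
  rw [card_eq_one]
  refine ⟨∅, eq_singleton_iff_unique_mem.2 ⟨mem_canonicalStrs.2 ⟨?_, ?_⟩, fun S hS => ?_⟩⟩
  · simp [IsSecStr]
  · simp [IsCanonical]
  · exact (mem_canonicalStrs.1 hS).1.eq_empty hn

lemma preCanonicalStrs_of_lt_three (hn : n < 3) : preCanonicalStrs n = ∅ := by
  refine eq_empty_of_forall_notMem fun T hT => ?_
  obtain ⟨hT, hc⟩ := mem_preCanonicalStrs.1 hT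
  have := hT.1 _ ((isCanonical_enclose_iff hT).1 hc).1
  simp only at this
  omega

lemma card_filter_forall_ne_one (n : ℕ) :
    #((canonicalStrs (n + 1)).filter fun S => ∀ p ∈ S, p.1 ≠ 1) = #(canonicalStrs n) := by
  suffices (canonicalStrs (n + 1)).filter (fun S => ∀ p ∈ S, p.1 ≠ 1) =
      (canonicalStrs n).map ⟨shiftStr 1, shiftStr_injective 1⟩ by
    rw [this, card_map]
  ext S
  simp only [mem_filter, mem_map, mem_canonicalStrs, Function.Embedding.coeFn_mk]
  constructor
  · rintro ⟨⟨hS, hc⟩, h1⟩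
    obtain ⟨W, hW, rfl⟩ := hS.exists_eq_shiftStr (k := 1) fun p hp => by
      have := hS.1 p hp; have := h1 p hp; omega
    rw [Nat.add_sub_cancel] at hW
    exact ⟨W, ⟨hW, (isCanonical_shiftStr_iff hW).1 hc⟩, rfl⟩
  · rintro ⟨W, ⟨hW, hc⟩, rfl⟩
    exact ⟨⟨isSecStr_shiftStr hW, (isCanonical_shiftStr_iff hW).2 hc⟩,
      fun p hp => (lt_of_mem_shiftStr hW hp).ne'⟩

lemma card_filter_mem_one_add_two (i k : ℕ) :
    #((canonicalStrs (i + 2 + k)).filter ((1, i + 2) ∈ ·)) =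
      #(preCanonicalStrs i) * #(canonicalStrs k) := by
  have hS : (canonicalStrs (i + 2 + k)).filter ((1, i + 2) ∈ ·) =
      (preCanonicalStrs i ×ˢ canonicalStrs k).image
        fun VW => enclose i VW.1 ∪ shiftStr (i + 2) VW.2 := by
    ext S
    simp only [mem_filter, mem_image, mem_product, mem_canonicalStrs, mem_preCanonicalStrs,
      Prod.exists]
    constructor
    · rintro ⟨⟨hS, hc⟩, hi⟩
      obtain ⟨V, W, hV, hW, rfl⟩ := hS.exists_eq_enclose_union hc hi
      exact ⟨V, W, ⟨hV, hW⟩, rfl⟩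
    · rintro ⟨V, W, ⟨⟨hV, hcV⟩, hW, hcW⟩, rfl⟩
      have hi := ((isCanonical_enclose_iff hV).1 hcV).1
      have := hV.1 _ hi
      refine ⟨⟨isSecStr_union (isSecStr_enclose hV (by simp only at this; omega))
        ((isSecStr_shiftStr hW).mono (by omega)) (by omega) fun p hp => lt_of_mem_shiftStr hW hp,
        hcV.union ((isCanonical_shiftStr_iff hW).2 hcW)⟩, mem_union_left _ (mem_insert_self _ _)⟩
  rw [hS, card_image_of_injOn, card_product]
  rintro ⟨V, W⟩ hVW ⟨V', W'⟩ hVW' h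
  simp only [coe_product, Set.mem_prod, mem_coe, mem_preCanonicalStrs, mem_canonicalStrs] at hVW hVW'
  exact Prod.ext_iff.2 (enclose_union_shiftStr_inj hVW.1.1 hVW'.1.1 hVW.2.1 hVW'.2.1 h)

lemma card_canonicalStrs_add_two (n : ℕ) :
    #(canonicalStrs (n + 2)) = #(canonicalStrs (n + 1)) +
      ∑ p ∈ antidiagonal n, #(preCanonicalStrs p.1) * #(canonicalStrs p.2) := by
  rw [← card_filter_add_card_filter_not (fun S => ∀ p ∈ S, p.1 ≠ 1), card_filter_forall_ne_one]
  congr 1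
  have hpaired : (canonicalStrs (n + 2)).filter (fun S => ¬ ∀ p ∈ S, p.1 ≠ 1) =
      (antidiagonal n).biUnion fun p => (canonicalStrs (n + 2)).filter ((1, p.1 + 2) ∈ ·) := by
    ext S
    simp only [mem_filter, mem_biUnion, HasAntidiagonal.mem_antidiagonal, not_forall, not_not, exists_prop]
    constructor
    · rintro ⟨hS, q, hq, hq1⟩
      have := (mem_canonicalStrs.1 hS).1.1 q hq
      refine ⟨(q.2 - 2, n + 2 - q.2), by omega, hS, ?_⟩
      convert hq using 1
      ext <;> simp <;> omega
    · rintro ⟨p, -, hS, hp⟩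
      exact ⟨hS, _, hp, rfl⟩
  rw [hpaired, card_biUnion]
  · refine sum_congr rfl fun p hp => ?_
    rw [HasAntidiagonal.mem_antidiagonal] at hp
    rw [show n + 2 = p.1 + 2 + p.2 by omega, card_filter_mem_one_add_two]
  · intro p hp q hq hpq
    refine disjoint_left.2 fun S hSp hSq => ?_
    obtain ⟨hS, hp1⟩ := mem_filter.1 hSp
    have hpq1 : p.1 ≠ q.1 := fun h => hpq <| by
      rw [mem_coe, HasAntidiagonal.mem_antidiagonal] at hp hq
      ext <;> omega
    have := (mem_canonicalStrs.1 hS).1.2.1 _ hp1 _ (mem_filter.1 hSq).2 (by simpa using hpq1)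
    simp at this

lemma card_preCanonicalStrs_add_two (hm : 1 ≤ m) :
    #(preCanonicalStrs (m + 2)) = #((secStrs m).filter (IsCanonicalExcept (1, m))) := by
  have hpre : preCanonicalStrs (m + 2) = ((secStrs m).filter (IsCanonicalExcept (1, m))).image
      (enclose m) := by
    ext T
    simp only [mem_preCanonicalStrs, mem_image, mem_filter, mem_secStrs]
    constructor
    · rintro ⟨hT, hc⟩
      obtain ⟨h1, hexc⟩ := (isCanonical_enclose_iff hT).1 hc
      obtain ⟨W, hW, rfl⟩ := hT.exists_eq_enclose h1
      rw [Nat.add_sub_cancel] at hW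
      exact ⟨W, ⟨hW, (isCanonicalExcept_enclose_iff hW).1 hexc⟩, rfl⟩
    · rintro ⟨W, ⟨hW, hexc⟩, rfl⟩
      have hT := isSecStr_enclose hW hm
      refine ⟨hT, (isCanonical_enclose_iff hT).2 ⟨mem_insert_self _ _, ?_⟩⟩
      exact (isCanonicalExcept_enclose_iff hW).2 hexc
  rw [hpre, card_image_of_injOn]
  intro V hV W hW h
  exact (enclose_inj (mem_secStrs.1 (mem_filter.1 hV).1) (mem_secStrs.1 (mem_filter.1 hW).1)).1 h

lemma card_filter_isCanonicalExcept (m : ℕ) :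
    #((secStrs m).filter (IsCanonicalExcept (1, m))) +
        #((canonicalStrs m).filter ((1, m) ∈ ·)) =
      #(preCanonicalStrs m) + #(canonicalStrs m) := by
  have hmem : ((secStrs m).filter (IsCanonicalExcept (1, m))).filter ((1, m) ∈ ·) =
      preCanonicalStrs m := by
    ext T
    simp only [mem_filter, mem_preCanonicalStrs, mem_secStrs]
    constructor
    · rintro ⟨⟨hT, hexc⟩, h1⟩
      exact ⟨hT, (isCanonical_enclose_iff hT).2 ⟨h1, hexc⟩⟩
    · rintro ⟨hT, hc⟩
      exact ⟨⟨hT, ((isCanonical_enclose_iff hT).1 hc).2⟩, ((isCanonical_enclose_iff hT).1 hc).1⟩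
  have hnot : ((secStrs m).filter (IsCanonicalExcept (1, m))).filter ((1, m) ∉ ·) =
      (canonicalStrs m).filter ((1, m) ∉ ·) := by
    ext T
    simp only [mem_filter, mem_canonicalStrs, mem_secStrs, and_congr_left_iff, and_congr_right_iff]
    intro h1 _
    exact ⟨fun hexc p hp => hexc p hp (ne_of_mem_of_not_mem hp h1),
      fun hc p hp _ => hc p hp⟩
  rw [← card_filter_add_card_filter_not (s := (secStrs m).filter _) ((1, m) ∈ ·), hmem, hnot,
    ← card_filter_add_card_filter_not (s := canonicalStrs m) ((1, m) ∈ ·)]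
  omega

lemma card_preCanonicalStrs_three : #(preCanonicalStrs 3) = 1 := by
  have h := card_filter_isCanonicalExcept 1
  rw [← card_preCanonicalStrs_add_two le_rfl, preCanonicalStrs_of_lt_three (n := 1) (by omega),
    card_canonicalStrs_of_lt_three (n := 1) (by omega)] at h
  have h11 : (canonicalStrs 1).filter ((1, 1) ∈ ·) = ∅ :=
    filter_false_of_mem fun S hS h11 => by have := (mem_canonicalStrs.1 hS).1.1 _ h11; simp at this
  simpa [h11] using h

lemma card_preCanonicalStrs_add_four (k : ℕ) :
    #(preCanonicalStrs (k + 4)) + #(preCanonicalStrs k) =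
      #(preCanonicalStrs (k + 2)) + #(canonicalStrs (k + 2)) := by
  have h := card_filter_isCanonicalExcept (k + 2)
  have houter := card_filter_mem_one_add_two k 0
  rw [card_canonicalStrs_of_lt_three (n := 0) (by omega), mul_one, add_zero] at houter
  rwa [← card_preCanonicalStrs_add_two (by omega), houter] at h

end Counting

end

open PowerSeries

/-- Unlike `canonGF`, this counts the empty structure on `[1,0]`. -/
noncomputable def canonCountGF : PowerSeries ℚ :=
  mk fun n => (#(canonicalStrs n) : ℚ)

lemma canonCountGF_eq_one_add_canonGF : canonCountGF = 1 + canonGF := by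
  ext n
  rcases n with _ | n
  · simp [canonCountGF, canonGF, card_canonicalStrs_of_lt_three]
  · simp [canonCountGF, canonGF, numCanonical_eq_card]

lemma coeff_canonRGF (n : ℕ) : coeff n canonRGF = #(preCanonicalStrs n) := by
  rcases n with _ | n
  · simp [canonRGF, preCanonicalStrs_of_lt_three]
  · simp [canonRGF, numPreCanonical_eq_card]

lemma canonCountGF_eq :
    canonCountGF = 1 + X * canonCountGF + X ^ 2 * canonRGF * canonCountGF := by
  ext n
  rcases n with _ | _ | n
  · simp [canonCountGF, card_canonicalStrs_of_lt_three]
  · simp [canonCountGF, mul_assoc, coeff_X_pow_mul', card_canonicalStrs_of_lt_three]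
  · rw [mul_assoc, map_add, map_add, coeff_succ_X_mul, coeff_X_pow_mul', if_pos (by omega)]
    simp [canonCountGF, coeff_mul, coeff_canonRGF, card_canonicalStrs_add_two]

lemma canonRGF_add_X_pow_four_mul :
    canonRGF + X ^ 4 * canonRGF = X ^ 2 * canonRGF + X ^ 2 * canonGF := by
  ext n
  rcases n with _ | _ | _ | _ | k
  · simp [canonRGF]
  · simp [coeff_canonRGF, coeff_X_pow_mul', preCanonicalStrs_of_lt_three]
  · simp [coeff_canonRGF, coeff_X_pow_mul', canonGF, preCanonicalStrs_of_lt_three]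
  · simp [coeff_canonRGF, coeff_X_pow_mul', canonGF, preCanonicalStrs_of_lt_three,
      card_preCanonicalStrs_three, numCanonical_eq_card, card_canonicalStrs_of_lt_three]
  · simp [coeff_canonRGF, coeff_X_pow_mul', canonGF, numCanonical_eq_card]
    exact_mod_cast card_preCanonicalStrs_add_four k

open PowerSeries in
/-- The generating functions satisfy `S = z + zS + z²R + z²SR` and
`R = z³ + z²R + z⁴SR + z³S`. -/
theorem canonical_gf_system :
    canonGF = X + X * canonGF + X ^ 2 * canonRGF + X ^ 2 * canonGF * canonRGF ∧
    canonRGF = X ^ 3 + X ^ 2 * canonRGF + X ^ 4 * canonGF * canonRGF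
      + X ^ 3 * canonGF := by
  have hS := canonCountGF_eq
  have hR := canonRGF_add_X_pow_four_mul
  rw [canonCountGF_eq_one_add_canonGF] at hS
  exact ⟨by linear_combination hS, by linear_combination hR + X ^ 2 * hS⟩
end

section
/- Let s_n be the number of saturated secondary structures on [1,n] (with θ = 1, and s_0 = 0), and let r_n be the number of saturated secondary structures on [1,n] having no visible position (r_0 = 0). Then the formal power series S(z) = Σ_{n≥1} s_n z^n and R(z) = Σ_{n≥1} r_n z^n in ℚ[[z]] satisfy the system S = z + z² + zR + z²R + z²S + z²S² and R = z²S + z²RS. -/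
/-- A secondary structure on `[1,n]` is saturated if no base pair can be added
so that the result is still a secondary structure on `[1,n]`. -/
def IsSaturated (n : ℕ) (S : Finset (ℕ × ℕ)) : Prop :=
  IsSecStr n S ∧ ∀ p : ℕ × ℕ, p ∉ S → ¬ IsSecStr n (insert p S)

/-- No position of `[1,n]` is visible in `S` (i.e. external to every base pair):
every `i ∈ [1,n]` lies (weakly) between the two ends of some base pair. -/
def NoVisible (n : ℕ) (S : Finset (ℕ × ℕ)) : Prop :=
  ∀ i : ℕ, 1 ≤ i → i ≤ n → ∃ p ∈ S, p.1 ≤ i ∧ i ≤ p.2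

/-- `S(z) = Σ_{n≥1} s_n zⁿ`, with `s_n` the number of saturated secondary structures
on `[1,n]` (θ = 1). -/
noncomputable def satGF : PowerSeries ℚ :=
  PowerSeries.mk fun n =>
    if n = 0 then 0 else (Set.ncard {S : Finset (ℕ × ℕ) | IsSaturated n S} : ℚ)

/-- `R(z) = Σ_{n≥1} r_n zⁿ`, with `r_n` the number of saturated secondary structures
on `[1,n]` having no visible position. -/
noncomputable def satNoVisGF : PowerSeries ℚ :=
  PowerSeries.mk fun n =>
    if n = 0 then 0
    else (Set.ncard {S : Finset (ℕ × ℕ) | IsSaturated n S ∧ NoVisible n S} : ℚ)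

/-!
Saturation and visibility make sense on any interval `[a, b]`, and the number of saturated
structures only depends on its length. Sort a saturated structure on `[1, n]` by what happens
at position `1`.

* If `1` is paired with `j`, the pair `(1, j)` separates the structure into independent
  structures on `[2, j - 1]` and `[j + 1, n]`, and the whole is saturated iff both parts are.
  This gives `z² S (1 + S)`, where `1 + S` also counts the empty structure on an empty interval.
* If `1` is unpaired, the structure is saturated iff it is saturated on `[2, n]` and covers
  every position `k ≥ 3` (otherwise `(1, k)` could be added). Either position `2` is covered
  too, and `[2, n]` has no visible position (`z (1 + R)`), or `2` is unpaired as well and the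
  structure on `[3, n]` has no visible position (`z² (1 + R)`).

A structure without visible position pairs `1`, and then its part outside that pair is exactly
what must have no visible position: `R = z² S (1 + R)`.
-/

open Finset

namespace SecStr

def InRange (a b : ℕ) (p : ℕ × ℕ) : Prop :=
  a ≤ p.1 ∧ p.1 + 1 < p.2 ∧ p.2 ≤ b

theorem InRange.mono {a a' b b' : ℕ} {p : ℕ × ℕ} (hp : InRange a' b' p) (ha : a ≤ a')
    (hb : b' ≤ b) : InRange a b p :=
  ⟨ha.trans hp.1, hp.2.1, hp.2.2.trans hb⟩

def Compatible (p q : ℕ × ℕ) : Prop :=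
  p.1 ≠ q.1 ∧ p.1 ≠ q.2 ∧ p.2 ≠ q.1 ∧ p.2 ≠ q.2 ∧
    ¬ (p.1 < q.1 ∧ q.1 < p.2 ∧ p.2 < q.2) ∧ ¬ (q.1 < p.1 ∧ p.1 < q.2 ∧ q.2 < p.2)

instance : Std.Symm Compatible :=
  ⟨fun _ _ ⟨h₁, h₂, h₃, h₄, h₅, h₆⟩ => ⟨h₁.symm, h₃.symm, h₂.symm, h₄.symm, h₆, h₅⟩⟩

theorem not_compatible_self (p : ℕ × ℕ) : ¬ Compatible p p := fun h => h.1 rfl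

def IsSecStrOn (a b : ℕ) (S : Finset (ℕ × ℕ)) : Prop :=
  (∀ p ∈ S, InRange a b p) ∧ (S : Set (ℕ × ℕ)).Pairwise Compatible

/-- A pair of `S` is not compatible with itself, so "no pair can be added to `S`" becomes
"every pair that fits conflicts with some pair of `S`". -/
def IsSaturatedOn (a b : ℕ) (S : Finset (ℕ × ℕ)) : Prop :=
  IsSecStrOn a b S ∧ ∀ q, InRange a b q → ∃ p ∈ S, ¬ Compatible p q

def CoveredOn (a b : ℕ) (S : Finset (ℕ × ℕ)) : Prop :=
  ∀ i, a ≤ i → i ≤ b → ∃ p ∈ S, p.1 ≤ i ∧ i ≤ p.2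

theorem isSecStr_iff_isSecStrOn {n : ℕ} {S : Finset (ℕ × ℕ)} :
    IsSecStr n S ↔ IsSecStrOn 1 n S := by
  refine and_congr Iff.rfl ⟨fun ⟨hdisj, hcross⟩ p hp q hq hpq => ?_, fun h => ⟨?_, ?_⟩⟩
  · obtain ⟨h₁, h₂, h₃, h₄⟩ := hdisj p hp q hq hpq
    exact ⟨h₁, h₂, h₃, h₄, hcross p hp q hq, hcross q hq p hp⟩
  · intro p hp q hq hpq
    obtain ⟨h₁, h₂, h₃, h₄, -⟩ := h hp hq hpq
    exact ⟨h₁, h₂, h₃, h₄⟩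
  · intro p hp q hq
    by_cases hpq : p = q
    · subst hpq; omega
    · exact (h hp hq hpq).2.2.2.2.1

theorem IsSecStrOn.insert_iff {a b : ℕ} {S : Finset (ℕ × ℕ)} (hS : IsSecStrOn a b S)
    (q : ℕ × ℕ) :
    IsSecStrOn a b (insert q S) ↔ InRange a b q ∧ ∀ p ∈ S, q ≠ p → Compatible q p := by
  simp only [IsSecStrOn, forall_mem_insert, coe_insert, Set.pairwise_insert_of_symm, mem_coe]
  exact ⟨fun h => ⟨h.1.1, h.2.2⟩, fun h => ⟨⟨h.1, hS.1⟩, hS.2, h.2⟩⟩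

theorem isSaturated_iff_isSaturatedOn {n : ℕ} {S : Finset (ℕ × ℕ)} :
    IsSaturated n S ↔ IsSaturatedOn 1 n S := by
  rw [IsSaturated, IsSaturatedOn, isSecStr_iff_isSecStrOn]
  refine and_congr_right fun hS => ⟨fun h q hq => ?_, fun h q hqS hins => ?_⟩
  · by_cases hqS : q ∈ S
    · exact ⟨q, hqS, not_compatible_self q⟩
    · by_contra! hcompat
      exact h q hqS (isSecStr_iff_isSecStrOn.2 <| (hS.insert_iff q).2
        ⟨hq, fun p hp _ => symm (hcompat p hp)⟩)
  · rw [isSecStr_iff_isSecStrOn, hS.insert_iff] at hins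
    obtain ⟨p, hp, hpq⟩ := h q hins.1
    exact hpq (symm (hins.2 p hp (by rintro rfl; exact hqS hp)))

section Shift

def shift (d : ℕ) : ℕ × ℕ ↪ ℕ × ℕ := (addRightEmbedding d).prodMap (addRightEmbedding d)

@[simp] theorem shift_apply (d : ℕ) (p : ℕ × ℕ) : shift d p = (p.1 + d, p.2 + d) := rfl

variable {a b d : ℕ}

theorem inRange_shift {p : ℕ × ℕ} : InRange (a + d) (b + d) (shift d p) ↔ InRange a b p := by
  simp only [InRange, shift_apply]; omega

theorem compatible_shift {p q : ℕ × ℕ} : Compatible (shift d p) (shift d q) ↔ Compatible p q := by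
  simp only [Compatible, shift_apply]; omega

theorem exists_shift_eq_of_inRange {q : ℕ × ℕ} (hq : InRange (a + d) (b + d) q) :
    ∃ q', shift d q' = q :=
  ⟨(q.1 - d, q.2 - d), by simp only [InRange] at hq; ext <;> simp <;> omega⟩

theorem isSaturatedOn_map_shift {S : Finset (ℕ × ℕ)} :
    IsSaturatedOn (a + d) (b + d) (S.map (shift d)) ↔ IsSaturatedOn a b S := by
  have hpairwise : (S.map (shift d) : Set (ℕ × ℕ)).Pairwise Compatible ↔
      (S : Set (ℕ × ℕ)).Pairwise Compatible := by
    rw [coe_map, (shift d).injective.injOn.pairwise_image,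
      show Function.onFun Compatible (shift d) = Compatible from
        funext₂ fun _ _ => propext compatible_shift]
  have hblocked : (∀ q, InRange (a + d) (b + d) q → ∃ p ∈ S.map (shift d), ¬ Compatible p q) ↔
      ∀ q, InRange a b q → ∃ p ∈ S, ¬ Compatible p q := by
    refine ⟨fun h q hq => ?_, fun h q hq => ?_⟩
    · obtain ⟨_, hmem, hpq⟩ := h (shift d q) (inRange_shift.2 hq)
      obtain ⟨p, hp, rfl⟩ := mem_map.1 hmem
      exact ⟨p, hp, compatible_shift.not.1 hpq⟩
    · obtain ⟨q, rfl⟩ := exists_shift_eq_of_inRange hq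
      obtain ⟨p, hp, hpq⟩ := h q (inRange_shift.1 hq)
      exact ⟨shift d p, mem_map_of_mem _ hp, compatible_shift.not.2 hpq⟩
  simp only [IsSaturatedOn, IsSecStrOn, forall_mem_map, inRange_shift, hpairwise, hblocked]

theorem coveredOn_map_shift {S : Finset (ℕ × ℕ)} :
    CoveredOn (a + d) (b + d) (S.map (shift d)) ↔ CoveredOn a b S := by
  simp only [CoveredOn, mem_map, exists_exists_and_eq_and, shift_apply]
  refine ⟨fun h i hai hib => ?_, fun h i hai hib => ?_⟩
  · obtain ⟨p, hp, hp₁, hp₂⟩ := h (i + d) (by omega) (by omega)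
    exact ⟨p, hp, by omega, by omega⟩
  · obtain ⟨p, hp, hp₁, hp₂⟩ := h (i - d) (by omega) (by omega)
    exact ⟨p, hp, by omega, by omega⟩

theorem exists_map_shift_eq {S : Finset (ℕ × ℕ)} (h : ∀ p ∈ S, InRange (a + d) (b + d) p) :
    ∃ T : Finset (ℕ × ℕ), T.map (shift d) = S := by
  classical
  refine ⟨S.preimage (shift d) (shift d).injective.injOn, ?_⟩
  rw [map_eq_image, image_preimage, filter_true_of_mem]
  exact fun q hq => exists_shift_eq_of_inRange (h q hq)

end Shift

section Unpaired

variable {a a' b : ℕ} {S : Finset (ℕ × ℕ)}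

theorem CoveredOn.mono_left (h : a ≤ a') (hS : CoveredOn a b S) : CoveredOn a' b S :=
  fun i hi => hS i (h.trans hi)

theorem isSaturatedOn_iff_of_forall_lt (h : ∀ p ∈ S, a < p.1) :
    IsSaturatedOn a b S ↔ IsSaturatedOn (a + 1) b S ∧ CoveredOn (a + 2) b S := by
  have hsec : IsSecStrOn a b S ↔ IsSecStrOn (a + 1) b S :=
    and_congr_left' <| forall₂_congr fun p hp => by
      have := h p hp
      simp only [InRange]
      omega
  constructor
  · rintro ⟨hS, hblocked⟩
    refine ⟨⟨hsec.1 hS, fun q hq => hblocked q (by simp only [InRange] at hq ⊢; omega)⟩,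
      fun k hak hkb => ?_⟩
    -- `(a, k)` cannot be added, and `p` is not attached to `a`: so `p` covers `k`
    obtain ⟨p, hp, hpk⟩ := hblocked (a, k) (by simp only [InRange]; omega)
    have := h p hp
    have := hS.1 p hp
    simp only [Compatible, InRange] at hpk this
    exact ⟨p, hp, by omega, by omega⟩
  · rintro ⟨⟨hS, hblocked⟩, hcovered⟩
    refine ⟨hsec.2 hS, fun q hq => ?_⟩
    by_cases hqa : q.1 = a
    · -- a pair covering `q.2` shares an endpoint with `q` or crosses it
      obtain ⟨p, hp, hp₁, hp₂⟩ := hcovered q.2 (by simp only [InRange] at hq; omega)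
        (by simp only [InRange] at hq; omega)
      have := h p hp
      refine ⟨p, hp, fun hpq => ?_⟩
      simp only [Compatible] at hpq
      omega
    · exact hblocked q (by simp only [InRange] at hq ⊢; omega)

end Unpaired

section Glue

/-- The pair `(c, i + 1)` closing a structure on `[c + 1, i]`, next to one on `[i + 2, e]`. -/
def glue (c i : ℕ) (x : Finset (ℕ × ℕ) × Finset (ℕ × ℕ)) : Finset (ℕ × ℕ) :=
  insert (c, i + 1) (x.1 ∪ x.2)

variable {c i e : ℕ} {A B S : Finset (ℕ × ℕ)}

theorem inRange_of_compatible (hci : c < i) {q : ℕ × ℕ} (hq : InRange c e q)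
    (h : Compatible (c, i + 1) q) :
    InRange (c + 1) i q ∨ InRange (i + 2) e q := by
  simp only [InRange, Compatible] at hq h ⊢
  omega

theorem compatible_of_inRange_left {q : ℕ × ℕ} (hq : InRange (c + 1) i q) :
    Compatible (c, i + 1) q := by
  simp only [InRange, Compatible] at hq ⊢
  omega

theorem compatible_of_inRange_right (hci : c < i) {q : ℕ × ℕ} (hq : InRange (i + 2) e q) :
    Compatible (c, i + 1) q := by
  simp only [InRange, Compatible] at hq ⊢
  omega

theorem compatible_of_inRange_of_inRange {p q : ℕ × ℕ} (hp : InRange c i p)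
    (hq : InRange (i + 2) e q) : Compatible p q := by
  simp only [InRange, Compatible] at hp hq ⊢
  omega

theorem IsSecStrOn.eq_or_inRange_or_inRange (hS : IsSecStrOn c e S) (hc : (c, i + 1) ∈ S)
    {p : ℕ × ℕ} (hp : p ∈ S) : p = (c, i + 1) ∨ InRange (c + 1) i p ∨ InRange (i + 2) e p :=
  or_iff_not_imp_left.2 fun hne =>
    inRange_of_compatible (by have := hS.1 _ hc; simp only [InRange] at this; omega) (hS.1 p hp)
      (hS.2 (mem_coe.2 hc) (mem_coe.2 hp) (Ne.symm hne))

theorem glue_filter (hS : IsSecStrOn c e S) (hc : (c, i + 1) ∈ S) :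
    glue c i (S.filter (·.2 ≤ i), S.filter (i + 1 < ·.1)) = S := by
  ext p
  simp only [glue, mem_insert, mem_union, mem_filter]
  constructor
  · rintro (rfl | ⟨hp, -⟩ | ⟨hp, -⟩) <;> assumption
  · intro hp
    rcases hS.eq_or_inRange_or_inRange hc hp with rfl | hA | hB
    · exact Or.inl rfl
    · exact Or.inr (Or.inl ⟨hp, hA.2.2⟩)
    · exact Or.inr (Or.inr ⟨hp, by have := hB.1; omega⟩)

theorem IsSecStrOn.inRange_of_mem_filter_snd_le (hS : IsSecStrOn c e S) (hc : (c, i + 1) ∈ S) :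
    ∀ p ∈ S.filter (·.2 ≤ i), InRange (c + 1) i p := by
  intro p hp
  rw [mem_filter] at hp
  rcases hS.eq_or_inRange_or_inRange hc hp.1 with rfl | hA | hB
  · exact absurd hp.2 (by simp)
  · exact hA
  · exact absurd hp.2 (by simp only [InRange] at hB; omega)

theorem IsSecStrOn.inRange_of_mem_filter_lt_fst (hS : IsSecStrOn c e S) (hc : (c, i + 1) ∈ S) :
    ∀ p ∈ S.filter (i + 1 < ·.1), InRange (i + 2) e p := by
  intro p hp
  rw [mem_filter] at hp
  rcases hS.eq_or_inRange_or_inRange hc hp.1 with rfl | hA | hB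
  · exact absurd hp.2 (by have := hS.1 _ hc; simp only [InRange] at this ⊢; omega)
  · exact absurd hp.2 (by simp only [InRange] at hA; omega)
  · exact hB

variable (hA : ∀ p ∈ A, InRange (c + 1) i p) (hB : ∀ p ∈ B, InRange (i + 2) e p)
include hA hB

theorem filter_snd_le_glue : (glue c i (A, B)).filter (·.2 ≤ i) = A := by
  ext p
  simp only [glue, mem_filter, mem_insert, mem_union]
  constructor
  · rintro ⟨rfl | hp | hp, hle⟩
    · simp at hle
    · exact hp
    · exact absurd hle (by have := hB p hp; simp only [InRange] at this; omega)
  · exact fun hp => ⟨Or.inr (Or.inl hp), (hA p hp).2.2⟩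

theorem filter_lt_fst_glue (hci : c < i) : (glue c i (A, B)).filter (i + 1 < ·.1) = B := by
  ext p
  simp only [glue, mem_filter, mem_insert, mem_union]
  constructor
  · rintro ⟨rfl | hp | hp, hlt⟩
    · simp at hlt; omega
    · exact absurd hlt (by have := hA p hp; simp only [InRange] at this; omega)
    · exact hp
  · exact fun hp => ⟨Or.inr (Or.inr hp), by have := hB p hp; simp only [InRange] at this; omega⟩

theorem isSecStrOn_glue_iff (hci : c < i) (hie : i + 1 ≤ e) :
    IsSecStrOn c e (glue c i (A, B)) ↔ IsSecStrOn (c + 1) i A ∧ IsSecStrOn (i + 2) e B := by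
  have hrange : ∀ p ∈ glue c i (A, B), InRange c e p := by
    simp only [glue, forall_mem_insert, mem_union]
    refine ⟨by simp only [InRange]; omega, fun p hp => ?_⟩
    rcases hp with hp | hp
    · exact (hA p hp).mono (Nat.le_succ c) (by omega)
    · exact (hB p hp).mono (by omega) le_rfl
  rw [IsSecStrOn, IsSecStrOn, IsSecStrOn, and_iff_right hrange, and_iff_right hA,
    and_iff_right hB, glue, coe_insert, coe_union, Set.pairwise_insert_of_symm,
    Set.pairwise_union_of_symm]
  refine ⟨fun h => ⟨h.1.1, h.1.2.1⟩, fun h => ⟨⟨h.1, h.2, fun p hp q hq _ =>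
    compatible_of_inRange_of_inRange (hA p hp) (hB q hq)⟩, fun q hq _ => ?_⟩⟩
  rcases hq with hq | hq
  · exact compatible_of_inRange_left (hA q hq)
  · exact compatible_of_inRange_right hci (hB q hq)

theorem isSaturatedOn_glue_iff (hci : c < i) (hie : i + 1 ≤ e) :
    IsSaturatedOn c e (glue c i (A, B)) ↔
      IsSaturatedOn (c + 1) i A ∧ IsSaturatedOn (i + 2) e B := by
  suffices (∀ q, InRange c e q → ∃ p ∈ glue c i (A, B), ¬ Compatible p q) ↔
      (∀ q, InRange (c + 1) i q → ∃ p ∈ A, ¬ Compatible p q) ∧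
        (∀ q, InRange (i + 2) e q → ∃ p ∈ B, ¬ Compatible p q) by
    rw [IsSaturatedOn, IsSaturatedOn, IsSaturatedOn, isSecStrOn_glue_iff hA hB hci hie, this]
    tauto
  simp only [glue, exists_mem_insert, mem_union, or_and_right, exists_or]
  constructor
  · intro h
    refine ⟨fun q hq => ?_, fun q hq => ?_⟩
    · rcases h q (hq.mono (Nat.le_succ c) (by omega)) with hPq | hAq | ⟨p, hp, hpq⟩
      · exact absurd (compatible_of_inRange_left hq) hPq
      · exact hAq
      · exact absurd (symm (compatible_of_inRange_of_inRange hq (hB p hp))) hpq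
    · rcases h q (hq.mono (by omega) le_rfl) with hPq | ⟨p, hp, hpq⟩ | hBq
      · exact absurd (compatible_of_inRange_right hci hq) hPq
      · exact absurd (compatible_of_inRange_of_inRange (hA p hp) hq) hpq
      · exact hBq
  · rintro ⟨hAq, hBq⟩ q hq
    by_cases hPq : Compatible (c, i + 1) q
    · rcases inRange_of_compatible hci hq hPq with hq' | hq'
      · exact Or.inr (Or.inl (hAq q hq'))
      · exact Or.inr (Or.inr (hBq q hq'))
    · exact Or.inl hPq

omit hB in
theorem coveredOn_glue_iff (hci : c < i) :
    CoveredOn c e (glue c i (A, B)) ↔ CoveredOn (i + 2) e B := by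
  simp only [CoveredOn, glue, exists_mem_insert, mem_union, or_and_right, exists_or]
  refine ⟨fun h k hk hke => ?_, fun h k hck hke => ?_⟩
  · rcases h k (by omega) hke with hP | ⟨p, hp, hpk⟩ | hBk
    · omega
    · have := hA p hp; simp only [InRange] at this; omega
    · exact hBk
  · by_cases hki : k ≤ i + 1
    · exact Or.inl ⟨hck, hki⟩
    · exact Or.inr (Or.inr (h k (by omega) hke))

end Glue

section Count

open scoped Classical

noncomputable def saturatedOn (a b : ℕ) : Finset (Finset (ℕ × ℕ)) :=
  ((Icc a b ×ˢ Icc a b).powerset).filter (IsSaturatedOn a b)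

noncomputable def saturatedCoveredOn (a b : ℕ) : Finset (Finset (ℕ × ℕ)) :=
  (saturatedOn a b).filter (CoveredOn a b)

variable {a b d : ℕ} {S : Finset (ℕ × ℕ)}

theorem mem_saturatedOn : S ∈ saturatedOn a b ↔ IsSaturatedOn a b S := by
  refine mem_filter.trans (and_iff_right_of_imp fun h => mem_powerset.2 fun p hp => ?_)
  have := h.1.1 p hp
  simp only [InRange, mem_product, mem_Icc] at this ⊢
  omega

theorem mem_saturatedCoveredOn :
    S ∈ saturatedCoveredOn a b ↔ IsSaturatedOn a b S ∧ CoveredOn a b S := by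
  rw [saturatedCoveredOn, mem_filter, mem_saturatedOn]

theorem saturatedOn_add :
    saturatedOn (a + d) (b + d) = (saturatedOn a b).map (mapEmbedding (shift d)).toEmbedding := by
  ext S
  simp only [mem_map, mem_saturatedOn, RelEmbedding.coe_toEmbedding, mapEmbedding_apply]
  refine ⟨fun h => ?_, fun ⟨T, hT, hTS⟩ => hTS ▸ isSaturatedOn_map_shift.2 hT⟩
  obtain ⟨T, rfl⟩ := exists_map_shift_eq h.1.1
  exact ⟨T, isSaturatedOn_map_shift.1 h, rfl⟩

theorem saturatedCoveredOn_add : saturatedCoveredOn (a + d) (b + d) =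
    (saturatedCoveredOn a b).map (mapEmbedding (shift d)).toEmbedding := by
  rw [saturatedCoveredOn, saturatedOn_add, filter_map, saturatedCoveredOn]
  congr 1
  exact filter_congr fun _ _ => coveredOn_map_shift

theorem card_saturatedOn_shift {a' b' : ℕ} (ha : a' = a + d) (hb : b' = b + d) :
    #(saturatedOn a' b') = #(saturatedOn a b) := by
  rw [ha, hb, saturatedOn_add, card_map]

theorem card_saturatedCoveredOn_shift {a' b' : ℕ} (ha : a' = a + d) (hb : b' = b + d) :
    #(saturatedCoveredOn a' b') = #(saturatedCoveredOn a b) := by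
  rw [ha, hb, saturatedCoveredOn_add, card_map]

theorem saturatedOn_of_lt (h : b < a + 2) : saturatedOn a b = {∅} := by
  have hnone : ∀ q, ¬ InRange a b q := fun q hq => by simp only [InRange] at hq; omega
  ext S
  rw [mem_saturatedOn, mem_singleton]
  refine ⟨fun hS => eq_empty_of_forall_notMem fun p hp => hnone p (hS.1.1 p hp), ?_⟩
  rintro rfl
  exact ⟨⟨by simp, by simp⟩, fun q hq => absurd hq (hnone q)⟩

theorem saturatedCoveredOn_of_lt (h : b < a) : saturatedCoveredOn a b = {∅} := by
  rw [saturatedCoveredOn, saturatedOn_of_lt (by omega), filter_singleton,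
    if_pos (show CoveredOn a b ∅ from fun i hai hib => by omega)]

theorem saturatedCoveredOn_eq_empty (hab : a ≤ b) (h : b < a + 2) :
    saturatedCoveredOn a b = ∅ := by
  rw [saturatedCoveredOn, saturatedOn_of_lt h, filter_singleton, if_neg]
  intro hcov
  obtain ⟨p, hp, -⟩ := hcov a le_rfl hab
  exact notMem_empty p hp

theorem filter_not_exists_fst_eq_saturatedOn :
    (saturatedOn a b).filter (fun S => ¬ ∃ p ∈ S, p.1 = a) =
      (saturatedOn (a + 1) b).filter (CoveredOn (a + 2) b) := by
  ext S
  simp only [mem_filter, mem_saturatedOn, not_exists, not_and]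
  constructor
  · rintro ⟨hS, hne⟩
    exact (isSaturatedOn_iff_of_forall_lt fun p hp =>
      lt_of_le_of_ne (hS.1.1 p hp).1 (Ne.symm (hne p hp))).1 hS
  · rintro ⟨hS, hcov⟩
    have h : ∀ p ∈ S, a < p.1 := fun p hp => (hS.1.1 p hp).1
    exact ⟨(isSaturatedOn_iff_of_forall_lt h).2 ⟨hS, hcov⟩, fun p hp => (h p hp).ne'⟩

theorem card_filter_saturatedOn_coveredOn_succ (hab : a ≤ b) :
    #((saturatedOn a b).filter (CoveredOn (a + 1) b)) =
      #(saturatedCoveredOn a b) + #(saturatedCoveredOn (a + 1) b) := by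
  rw [← card_filter_add_card_filter_not (p := CoveredOn a b), filter_filter, filter_filter]
  congr 2
  · exact filter_congr fun S _ => and_iff_right_of_imp (CoveredOn.mono_left (Nat.le_succ a))
  · ext S
    simp only [mem_filter, mem_saturatedCoveredOn, mem_saturatedOn]
    constructor
    · rintro ⟨hS, hcov, hncov⟩
      -- `a` itself is uncovered, so no pair starts at `a`
      have h : ∀ p ∈ S, a < p.1 := fun p hp => by
        refine lt_of_le_of_ne (hS.1.1 p hp).1 fun hpa => hncov fun k hak hkb => ?_
        rcases hak.eq_or_lt with rfl | hak
        · exact ⟨p, hp, hpa.ge, (hS.1.1 p hp).2.1.le.trans' (by omega)⟩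
        · exact hcov k hak hkb
      exact ⟨((isSaturatedOn_iff_of_forall_lt h).1 hS).1, hcov⟩
    · rintro ⟨hS, hcov⟩
      have h : ∀ p ∈ S, a < p.1 := fun p hp => (hS.1.1 p hp).1
      refine ⟨(isSaturatedOn_iff_of_forall_lt h).2 ⟨hS, hcov.mono_left (Nat.le_succ _)⟩, hcov,
        fun hcov' => ?_⟩
      obtain ⟨p, hp, hpa, -⟩ := hcov' a le_rfl hab
      exact absurd (h p hp) (by omega)

variable {c i e : ℕ}

theorem filter_mem_saturatedOn_eq_image (hci : c < i) (hie : i + 1 ≤ e) :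
    (saturatedOn c e).filter ((c, i + 1) ∈ ·) =
      (saturatedOn (c + 1) i ×ˢ saturatedOn (i + 2) e).image (glue c i) := by
  ext S
  simp only [mem_filter, mem_image, mem_product, mem_saturatedOn, Prod.exists]
  constructor
  · rintro ⟨hS, hc⟩
    have hA := hS.1.inRange_of_mem_filter_snd_le hc
    have hB := hS.1.inRange_of_mem_filter_lt_fst hc
    have hglue := glue_filter hS.1 hc
    rw [← hglue] at hS
    exact ⟨_, _, (isSaturatedOn_glue_iff hA hB hci hie).1 hS, hglue⟩
  · rintro ⟨A, B, ⟨hA, hB⟩, rfl⟩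
    exact ⟨(isSaturatedOn_glue_iff hA.1.1 hB.1.1 hci hie).2 ⟨hA, hB⟩, mem_insert_self _ _⟩

theorem injOn_glue (hci : c < i) :
    Set.InjOn (glue c i) (saturatedOn (c + 1) i ×ˢ saturatedOn (i + 2) e : Finset _) := by
  rintro ⟨A, B⟩ hAB ⟨A', B'⟩ hAB' h
  simp only [coe_product, Set.mem_prod, mem_coe, mem_saturatedOn] at hAB hAB'
  calc (A, B)
      = ((glue c i (A, B)).filter (·.2 ≤ i), (glue c i (A, B)).filter (i + 1 < ·.1)) := by
        rw [filter_snd_le_glue hAB.1.1.1 hAB.2.1.1, filter_lt_fst_glue hAB.1.1.1 hAB.2.1.1 hci]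
    _ = (A', B') := by
        rw [h, filter_snd_le_glue hAB'.1.1.1 hAB'.2.1.1,
          filter_lt_fst_glue hAB'.1.1.1 hAB'.2.1.1 hci]

theorem card_filter_mem_saturatedOn (hci : c < i) (hie : i + 1 ≤ e) :
    #((saturatedOn c e).filter ((c, i + 1) ∈ ·)) =
      #(saturatedOn (c + 1) i) * #(saturatedOn (i + 2) e) := by
  rw [filter_mem_saturatedOn_eq_image hci hie, card_image_of_injOn (injOn_glue hci), card_product]

theorem card_filter_mem_saturatedCoveredOn (hci : c < i) (hie : i + 1 ≤ e) :
    #((saturatedCoveredOn c e).filter ((c, i + 1) ∈ ·)) =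
      #(saturatedOn (c + 1) i) * #(saturatedCoveredOn (i + 2) e) := by
  have hcov : (saturatedOn (c + 1) i ×ˢ saturatedOn (i + 2) e).filter
      (fun x => CoveredOn c e (glue c i x)) =
        saturatedOn (c + 1) i ×ˢ saturatedCoveredOn (i + 2) e := by
    rw [saturatedCoveredOn, ← filter_product_right]
    refine filter_congr fun x hx => ?_
    rw [mem_product, mem_saturatedOn, mem_saturatedOn] at hx
    exact coveredOn_glue_iff hx.1.1.1 hci
  rw [saturatedCoveredOn, filter_comm, filter_mem_saturatedOn_eq_image hci hie, filter_image,
    hcov, card_image_of_injOn, card_product]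
  exact (injOn_glue hci).mono (coe_subset.2 (product_subset_product_right (filter_subset _ _)))

theorem card_filter_exists_fst_eq (m : ℕ) {F : Finset (Finset (ℕ × ℕ))}
    (hF : ∀ S ∈ F, IsSecStrOn c (c + m + 1) S) :
    #(F.filter fun S => ∃ p ∈ S, p.1 = c) =
      ∑ x ∈ antidiagonal m with x.1 ≠ 0, #(F.filter ((c, c + x.1 + 1) ∈ ·)) := by
  rw [← card_biUnion]
  · congr 1
    ext S
    simp only [mem_filter, mem_biUnion, HasAntidiagonal.mem_antidiagonal]
    constructor
    · rintro ⟨hSF, p, hp, rfl⟩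
      have := (hF S hSF).1 p hp
      simp only [InRange] at this
      refine ⟨(p.2 - p.1 - 1, m - (p.2 - p.1 - 1)), ⟨by omega, by omega⟩, hSF, ?_⟩
      convert hp using 2
      omega
    · rintro ⟨x, -, hSF, hx⟩
      exact ⟨hSF, _, hx, rfl⟩
  · intro x hx y hy hxy
    simp only [coe_filter, HasAntidiagonal.mem_antidiagonal] at hx hy
    replace hx : x.1 + x.2 = m := hx.1
    replace hy : y.1 + y.2 = m := hy.1
    refine disjoint_filter.2 fun S hSF hxS hyS => ?_
    have hne : (c, c + x.1 + 1) ≠ (c, c + y.1 + 1) := fun h =>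
      hxy (Prod.ext (by simpa using h) (by simp at h; omega))
    exact (hF S hSF).2 hxS hyS hne |>.1 rfl

theorem card_saturatedOn_one_add_two (m : ℕ) :
    #(saturatedOn 1 (m + 2)) = #(saturatedCoveredOn 1 (m + 1)) + #(saturatedCoveredOn 1 m) +
      ∑ x ∈ antidiagonal m with x.1 ≠ 0, #(saturatedOn 1 x.1) * #(saturatedOn 1 x.2) := by
  rw [← card_filter_add_card_filter_not (p := fun S => ∃ p ∈ S, p.1 = 1), add_comm,
    filter_not_exists_fst_eq_saturatedOn, card_filter_saturatedOn_coveredOn_succ (by omega),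
    card_saturatedCoveredOn_shift (a := 1) (d := 1) rfl rfl,
    card_saturatedCoveredOn_shift (a := 1) (d := 2) rfl rfl,
    card_filter_exists_fst_eq m fun S hS => by
      rw [show 1 + m + 1 = m + 2 by omega]; exact (mem_saturatedOn.1 hS).1]
  refine congrArg _ (sum_congr rfl fun x hx => ?_)
  rw [mem_filter, HasAntidiagonal.mem_antidiagonal] at hx
  rw [card_filter_mem_saturatedOn (by omega) (by omega),
    card_saturatedOn_shift (a' := 1 + 1) (b' := 1 + x.1) (a := 1) (b := x.1) (d := 1) rfl
      (by omega),
    card_saturatedOn_shift (a' := 1 + x.1 + 2) (b' := m + 2) (a := 1) (b := x.2) (d := x.1 + 2)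
      (by omega) (by omega)]

theorem card_saturatedCoveredOn_one_add_two (m : ℕ) :
    #(saturatedCoveredOn 1 (m + 2)) =
      ∑ x ∈ antidiagonal m with x.1 ≠ 0, #(saturatedOn 1 x.1) * #(saturatedCoveredOn 1 x.2) := by
  have hpaired : (saturatedCoveredOn 1 (m + 2)).filter (fun S => ∃ p ∈ S, p.1 = 1) =
      saturatedCoveredOn 1 (m + 2) := by
    refine filter_true_of_mem fun S hS => ?_
    rw [mem_saturatedCoveredOn] at hS
    obtain ⟨p, hp, hp₁, -⟩ := hS.2 1 le_rfl (by omega)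
    exact ⟨p, hp, le_antisymm hp₁ (hS.1.1.1 p hp).1⟩
  rw [← hpaired, card_filter_exists_fst_eq m fun S hS => by
      rw [show 1 + m + 1 = m + 2 by omega]; exact (mem_saturatedCoveredOn.1 hS).1.1]
  refine sum_congr rfl fun x hx => ?_
  rw [mem_filter, HasAntidiagonal.mem_antidiagonal] at hx
  rw [card_filter_mem_saturatedCoveredOn (by omega) (by omega),
    card_saturatedOn_shift (a' := 1 + 1) (b' := 1 + x.1) (a := 1) (b := x.1) (d := 1) rfl
      (by omega),
    card_saturatedCoveredOn_shift (a' := 1 + x.1 + 2) (b' := m + 2) (a := 1) (b := x.2)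
      (d := x.1 + 2) (by omega) (by omega)]

end Count

section GeneratingFunction

open PowerSeries

noncomputable def satSeries : PowerSeries ℚ :=
  mk fun n => (#(saturatedOn 1 n) : ℚ)

noncomputable def satCoveredSeries : PowerSeries ℚ :=
  mk fun n => (#(saturatedCoveredOn 1 n) : ℚ)

theorem coeff_satGF (n : ℕ) :
    coeff n satGF = if n = 0 then 0 else (#(saturatedOn 1 n) : ℚ) := by
  have : {S : Finset (ℕ × ℕ) | IsSaturated n S} = saturatedOn 1 n := by
    ext S
    simp [isSaturated_iff_isSaturatedOn, mem_saturatedOn]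
  rw [satGF, coeff_mk, this, Set.ncard_coe_finset]

theorem coeff_satNoVisGF (n : ℕ) :
    coeff n satNoVisGF = if n = 0 then 0 else (#(saturatedCoveredOn 1 n) : ℚ) := by
  have : {S : Finset (ℕ × ℕ) | IsSaturated n S ∧ NoVisible n S} = saturatedCoveredOn 1 n := by
    ext S
    simp [isSaturated_iff_isSaturatedOn, mem_saturatedCoveredOn, NoVisible, CoveredOn]
  rw [satNoVisGF, coeff_mk, this, Set.ncard_coe_finset]

theorem satSeries_eq : satSeries = 1 + satGF := by
  ext n
  rw [map_add, coeff_satGF, satSeries, coeff_mk, coeff_one]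
  rcases n with _ | n
  · simp [saturatedOn_of_lt]
  · simp

theorem satCoveredSeries_eq : satCoveredSeries = 1 + satNoVisGF := by
  ext n
  rw [map_add, coeff_satNoVisGF, satCoveredSeries, coeff_mk, coeff_one]
  rcases n with _ | n
  · simp [saturatedCoveredOn_of_lt]
  · simp

theorem coeff_satGF_mul (m : ℕ) (f : PowerSeries ℚ) :
    coeff m (satGF * f) =
      ∑ x ∈ antidiagonal m with x.1 ≠ 0, (#(saturatedOn 1 x.1) : ℚ) * coeff x.2 f := by
  rw [coeff_mul, sum_filter]
  refine sum_congr rfl fun x _ => ?_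
  rw [coeff_satGF]
  split_ifs <;> simp_all

theorem satSeries_eq_rec :
    satSeries =
      1 + X * satCoveredSeries + X ^ 2 * satCoveredSeries + X ^ 2 * (satGF * satSeries) := by
  ext (_ | _ | m)
  · simp [satSeries, saturatedOn_of_lt]
  · simp [satSeries, satCoveredSeries, coeff_X_pow_mul', saturatedOn_of_lt,
      saturatedCoveredOn_of_lt]
  · rw [map_add, map_add, map_add, coeff_succ_X_mul, coeff_X_pow_mul', coeff_X_pow_mul',
      if_pos (by omega), if_pos (by omega), show m + 1 + 1 - 2 = m by omega, coeff_satGF_mul]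
    simp only [satSeries, satCoveredSeries, coeff_mk, coeff_one, card_saturatedOn_one_add_two]
    push_cast
    ring

theorem satCoveredSeries_eq_rec : satCoveredSeries = 1 + X ^ 2 * (satGF * satCoveredSeries) := by
  ext (_ | _ | m)
  · simp [satCoveredSeries, saturatedCoveredOn_of_lt]
  · simp [satCoveredSeries, coeff_X_pow_mul', saturatedCoveredOn_eq_empty]
  · rw [map_add, coeff_X_pow_mul', if_pos (by omega), show m + 1 + 1 - 2 = m by omega,
      coeff_satGF_mul]
    simp only [satCoveredSeries, coeff_mk, coeff_one, card_saturatedCoveredOn_one_add_two]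
    push_cast
    ring

end GeneratingFunction

end SecStr

open PowerSeries in
/-- The generating functions satisfy `S = z + z² + zR + z²R + z²S + z²S²` and
`R = z²S + z²RS`. -/
theorem saturated_gf_system :
    satGF = X + X ^ 2 + X * satNoVisGF + X ^ 2 * satNoVisGF + X ^ 2 * satGF
      + X ^ 2 * satGF ^ 2 ∧
    satNoVisGF = X ^ 2 * satGF + X ^ 2 * satNoVisGF * satGF := by
  have hS := SecStr.satSeries_eq_rec
  have hR := SecStr.satCoveredSeries_eq_rec
  rw [SecStr.satSeries_eq] at hS
  rw [SecStr.satCoveredSeries_eq] at hS hR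
  exact ⟨by linear_combination hS, by linear_combination hR⟩
end

section
/- For every integer n ≥ 2, the number of stem-loop structures on [1,n] (with θ = 1) equals 2^{n−2} − 1. -/
/-- A stem-loop: a secondary structure containing a (unique) base pair `(i₀,j₀)` such that
every other base pair `(i,j)` satisfies `i < i₀ < j₀ < j`. -/
def IsStemLoop (n : ℕ) (S : Finset (ℕ × ℕ)) : Prop :=
  IsSecStr n S ∧ ∃ p ∈ S, ∀ q ∈ S, q ≠ p → q.1 < p.1 ∧ p.2 < q.2

open Finset

/-- A possibly empty chain of pairs under strict nesting. -/
def IsNest (n : ℕ) (S : Finset (ℕ × ℕ)) : Prop :=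
  (∀ p ∈ S, 1 ≤ p.1 ∧ p.1 + 1 < p.2 ∧ p.2 ≤ n) ∧ ∀ p ∈ S, ∀ q ∈ S, (p.1 ≤ q.1 ↔ q.2 ≤ p.2)

namespace IsNest

variable {n : ℕ} {S T : Finset (ℕ × ℕ)}

theorem mono (h : IsNest n S) (hT : T ⊆ S) : IsNest n T :=
  ⟨fun p hp => h.1 p (hT hp), fun p hp q hq => h.2 p (hT hp) q (hT hq)⟩

theorem lt_and_lt_of_le (h : IsNest n S) {p q : ℕ × ℕ} (hp : p ∈ S) (hq : q ∈ S) (hpq : p ≠ q)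
    (hle : p.1 ≤ q.1) : p.1 < q.1 ∧ q.2 < p.2 := by
  have h₁ := h.2 p hp q hq
  have h₂ := h.2 q hq p hp
  rw [Ne, Prod.ext_iff] at hpq
  omega

theorem insert (h : IsNest n S) {a b : ℕ} (ha : 1 ≤ a) (hab : a + 1 < b) (hb : b ≤ n)
    (hin : ∀ q ∈ S, a < q.1 ∧ q.2 < b) : IsNest n (insert (a, b) S) := by
  refine ⟨?_, ?_⟩
  · simp only [mem_insert, forall_eq_or_imp]
    exact ⟨⟨ha, hab, hb⟩, h.1⟩
  · simp only [mem_insert, forall_eq_or_imp]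
    refine ⟨⟨by simp, fun q hq => ?_⟩, fun p hp => ⟨?_, h.2 p hp⟩⟩
    · have := hin q hq; omega
    · have := hin p hp; omega

theorem exists_outer (h : IsNest n S) (hS : S.Nonempty) :
    ∃ o ∈ S, ∀ q ∈ S, q ≠ o → o.1 < q.1 ∧ q.2 < o.2 := by
  obtain ⟨o, ho, hmin⟩ := S.exists_min_image Prod.fst hS
  exact ⟨o, ho, fun q hq hqo => h.lt_and_lt_of_le ho hq (Ne.symm hqo) (hmin q hq)⟩

theorem exists_inner (h : IsNest n S) (hS : S.Nonempty) :
    ∃ i ∈ S, ∀ q ∈ S, q ≠ i → q.1 < i.1 ∧ i.2 < q.2 := by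
  obtain ⟨i, hi, hmax⟩ := S.exists_max_image Prod.fst hS
  exact ⟨i, hi, fun q hq hqi => h.lt_and_lt_of_le hq hi hqi (hmax q hq)⟩

end IsNest

theorem isStemLoop_iff {n : ℕ} {S : Finset (ℕ × ℕ)} :
    IsStemLoop n S ↔ IsNest n S ∧ S.Nonempty := by
  constructor
  · rintro ⟨⟨hbd, hdist, hcross⟩, i, hi, hinner⟩
    have hencl : ∀ r ∈ S, r.1 ≤ i.1 ∧ i.2 ≤ r.2 := fun r hr => by
      by_cases hri : r = i
      · simp [hri]
      · exact (hinner r hr hri).imp le_of_lt le_of_lt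
    refine ⟨⟨hbd, fun p hp q hq => ?_⟩, ⟨i, hi⟩⟩
    by_cases hpq : p = q
    · simp [hpq]
    have := hdist p hp q hq hpq
    have := hcross p hp q hq
    have := hcross q hq p hp
    have := hencl p hp
    have := hencl q hq
    have := hbd i hi
    omega
  · rintro ⟨h, hS⟩
    refine ⟨⟨h.1, fun p hp q hq hpq => ?_, fun p hp q hq => ?_⟩, h.exists_inner hS⟩
    · have h₁ := h.2 p hp q hq
      have h₂ := h.2 q hq p hp
      have := h.1 p hp
      have := h.1 q hq
      rw [Ne, Prod.ext_iff] at hpq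
      omega
    · have := h.2 p hp q hq
      have := h.1 q hq
      omega

def foldEnds (S : Finset (ℕ × ℕ)) : Finset ℕ :=
  S.image Prod.fst ∪ S.image (·.2 - 1)

section foldEnds

variable {S : Finset (ℕ × ℕ)} {p : ℕ × ℕ}

@[simp]
theorem mem_foldEnds {x : ℕ} : x ∈ foldEnds S ↔ ∃ p ∈ S, p.1 = x ∨ p.2 - 1 = x := by
  simp only [foldEnds, mem_union, mem_image]
  constructor
  · rintro (⟨p, hp, h⟩ | ⟨p, hp, h⟩)
    exacts [⟨p, hp, .inl h⟩, ⟨p, hp, .inr h⟩]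
  · rintro ⟨p, hp, h | h⟩
    exacts [.inl ⟨p, hp, h⟩, .inr ⟨p, hp, h⟩]

theorem fst_mem_foldEnds (hp : p ∈ S) : p.1 ∈ foldEnds S :=
  mem_foldEnds.2 ⟨p, hp, .inl rfl⟩

theorem snd_sub_one_mem_foldEnds (hp : p ∈ S) : p.2 - 1 ∈ foldEnds S :=
  mem_foldEnds.2 ⟨p, hp, .inr rfl⟩

@[simp]
theorem foldEnds_nonempty : (foldEnds S).Nonempty ↔ S.Nonempty := by
  simp [foldEnds]

theorem foldEnds_insert (o : ℕ × ℕ) (S : Finset (ℕ × ℕ)) :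
    foldEnds (insert o S) = insert o.1 (insert (o.2 - 1) (foldEnds S)) := by
  ext x
  simp only [mem_foldEnds, mem_insert, exists_eq_or_imp, or_assoc, @eq_comm _ x]

end foldEnds

namespace IsNest

variable {n : ℕ} {S T : Finset (ℕ × ℕ)}

theorem foldEnds_subset (h : IsNest n S) : foldEnds S ⊆ Icc 1 (n - 1) := by
  intro x hx
  obtain ⟨p, hp, hx⟩ := mem_foldEnds.1 hx
  have := h.1 p hp
  rw [mem_Icc]
  omega

theorem card_foldEnds (h : IsNest n S) : #(foldEnds S) = 2 * #S := by
  have hdisj : Disjoint (S.image Prod.fst) (S.image (·.2 - 1)) := by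
    simp only [disjoint_left, mem_image, not_exists, not_and]
    rintro _ ⟨p, hp, rfl⟩ q hq hqp
    have := h.2 p hp q hq
    have := h.1 p hp
    have := h.1 q hq
    omega
  rw [foldEnds, card_union_of_disjoint hdisj, card_image_of_injOn, card_image_of_injOn, two_mul]
  all_goals
    intro p hp q hq hpq
    have := h.2 p hp q hq
    have := h.2 q hq p hp
    have := h.1 p hp
    have := h.1 q hq
    beta_reduce at hpq
    ext <;> omega

variable {o : ℕ × ℕ}

theorem le_and_le_of_mem_foldEnds (h : IsNest n S) (ho : o ∈ S)
    (hout : ∀ q ∈ S, q ≠ o → o.1 < q.1 ∧ q.2 < o.2) {x : ℕ} (hx : x ∈ foldEnds S) :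
    o.1 ≤ x ∧ x ≤ o.2 - 1 := by
  obtain ⟨q, hq, hx⟩ := mem_foldEnds.1 hx
  have := h.1 q hq
  have := h.1 o ho
  by_cases hqo : q = o
  · subst hqo; omega
  · have := hout q hq hqo; omega

theorem foldEnds_erase_outer (h : IsNest n S) (hout : ∀ q ∈ S, q ≠ o → o.1 < q.1 ∧ q.2 < o.2) :
    foldEnds (S.erase o) = (foldEnds S).filter (fun x => o.1 < x ∧ x < o.2 - 1) := by
  ext x
  simp only [mem_filter, mem_foldEnds, mem_erase]
  constructor
  · rintro ⟨q, ⟨hqo, hq⟩, hx⟩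
    have := hout q hq hqo
    have := h.1 q hq
    exact ⟨⟨q, hq, hx⟩, by omega⟩
  · rintro ⟨⟨q, hq, hx⟩, hxo⟩
    refine ⟨q, ⟨?_, hq⟩, hx⟩
    rintro rfl
    omega

theorem eq_of_foldEnds_eq (hS : IsNest n S) (hT : IsNest n T) (h : foldEnds S = foldEnds T) :
    S = T := by
  induction S using Finset.strongInduction generalizing T with
  | H S ih =>
  rcases S.eq_empty_or_nonempty with rfl | hSne
  · rw [eq_comm, ← not_nonempty_iff_eq_empty, ← foldEnds_nonempty, ← h, foldEnds_nonempty]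
    exact not_nonempty_empty
  have hTne : T.Nonempty := foldEnds_nonempty.1 (h ▸ foldEnds_nonempty.2 hSne)
  obtain ⟨o, ho, hout⟩ := hS.exists_outer hSne
  obtain ⟨o', ho', hout'⟩ := hT.exists_outer hTne
  have h₁ := hS.le_and_le_of_mem_foldEnds ho hout (h ▸ fst_mem_foldEnds ho')
  have h₂ := hS.le_and_le_of_mem_foldEnds ho hout (h ▸ snd_sub_one_mem_foldEnds ho')
  have h₃ := hT.le_and_le_of_mem_foldEnds ho' hout' (h ▸ fst_mem_foldEnds ho)
  have h₄ := hT.le_and_le_of_mem_foldEnds ho' hout' (h ▸ snd_sub_one_mem_foldEnds ho)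
  have := hS.1 o ho
  have := hT.1 o' ho'
  obtain rfl : o = o' := Prod.ext (by omega) (by omega)
  have hrest : S.erase o = T.erase o :=
    ih _ (erase_ssubset ho) (hS.mono (erase_subset o S)) (hT.mono (erase_subset o T)) (by
      rw [hS.foldEnds_erase_outer hout, hT.foldEnds_erase_outer hout', h])
  rw [← insert_erase ho, ← insert_erase ho', hrest]

end IsNest

theorem exists_isNest_foldEnds_eq {n : ℕ} {E : Finset ℕ} (hE : E ⊆ Icc 1 (n - 1))
    (heven : Even #E) : ∃ S, IsNest n S ∧ foldEnds S = E := by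
  induction E using Finset.strongInduction with
  | H E ih =>
  rcases E.eq_empty_or_nonempty with rfl | hne
  · exact ⟨∅, ⟨by simp, by simp⟩, by simp [foldEnds]⟩
  set a := E.min' hne
  set b := E.max' hne
  have hcardE : 1 < #E := by
    obtain ⟨r, hr⟩ := heven
    have := hne.card_pos
    omega
  have hab : a < b := min'_lt_max'_of_card E hcardE
  have hb : b ∈ E.erase a := mem_erase.2 ⟨hab.ne', max'_mem E hne⟩
  set E' := (E.erase a).erase b
  have hE'E : E' ⊂ E := (erase_ssubset hb).trans (erase_ssubset (min'_mem E hne))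
  have hcard : #E' + 2 = #E := by
    rw [card_erase_of_mem hb, card_erase_of_mem (min'_mem E hne)]
    omega
  obtain ⟨S, hS, hSE⟩ := ih E' hE'E (hE'E.subset.trans hE) (by
    rw [← hcard] at heven
    simpa [parity_simps] using heven)
  have hbounds : ∀ x ∈ E', a < x ∧ x < b := fun x hx => by
    obtain ⟨hxb, hx⟩ := mem_erase.1 hx
    obtain ⟨hxa, hx⟩ := mem_erase.1 hx
    exact ⟨lt_of_le_of_ne (min'_le E x hx) (Ne.symm hxa), lt_of_le_of_ne (le_max' E x hx) hxb⟩
  have ha1 := mem_Icc.1 (hE (min'_mem E hne))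
  have hbn := mem_Icc.1 (hE (max'_mem E hne))
  refine ⟨insert (a, b + 1) S, hS.insert (by omega) (by omega) (by omega) fun q hq => ?_, ?_⟩
  · have h₁ := hbounds q.1 (hSE ▸ fst_mem_foldEnds hq)
    have h₂ := hbounds (q.2 - 1) (hSE ▸ snd_sub_one_mem_foldEnds hq)
    have := hS.1 q hq
    omega
  · rw [foldEnds_insert, hSE, Nat.add_sub_cancel, insert_erase hb, insert_erase (min'_mem E hne)]

theorem card_powerset_filter_even {α : Type*} (s : Finset α) :
    #{t ∈ s.powerset | Even #t} = 2 ^ (#s - 1) := by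
  rcases s.eq_empty_or_nonempty with rfl | hs
  · simp [filter_singleton]
  have hsum := sum_powerset_neg_one_pow_card_of_nonempty hs
  rw [← sum_filter_add_sum_filter_not _ (fun t => Even #t),
    sum_congr rfl fun t ht => (mem_filter.1 ht).2.neg_one_pow,
    sum_congr rfl fun t ht => (Nat.not_even_iff_odd.1 (mem_filter.1 ht).2).neg_one_pow] at hsum
  have htotal := card_filter_add_card_filter_not (s := s.powerset) (fun t => Even #t)
  have hpow : 2 ^ #s = 2 * 2 ^ (#s - 1) := by rw [← pow_succ', Nat.sub_add_cancel hs.card_pos]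
  rw [card_powerset, hpow] at htotal
  simp only [sum_const, nsmul_eq_mul, mul_one, mul_neg] at hsum
  omega

theorem injOn_foldEnds_setOf_isStemLoop (n : ℕ) :
    Set.InjOn foldEnds {S | IsStemLoop n S} := fun _ hS _ hT =>
  (isStemLoop_iff.1 hS).1.eq_of_foldEnds_eq (isStemLoop_iff.1 hT).1

theorem image_foldEnds_setOf_isStemLoop (n : ℕ) :
    foldEnds '' {S | IsStemLoop n S} =
      ↑({E ∈ (Icc 1 (n - 1)).powerset | Even #E}.erase ∅) := by
  ext E
  simp only [Set.mem_image, Set.mem_ofPred_eq, isStemLoop_iff, coe_erase, coe_filter,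
    mem_powerset, Set.mem_sdiff, Set.mem_singleton_iff]
  constructor
  · rintro ⟨S, ⟨hS, hne⟩, rfl⟩
    exact ⟨⟨hS.foldEnds_subset, hS.card_foldEnds ▸ even_two_mul _⟩,
      (foldEnds_nonempty.2 hne).ne_empty⟩
  · rintro ⟨⟨hsub, heven⟩, hne⟩
    obtain ⟨S, hS, rfl⟩ := exists_isNest_foldEnds_eq hsub heven
    exact ⟨S, ⟨hS, foldEnds_nonempty.1 (nonempty_iff_ne_empty.2 hne)⟩, rfl⟩

theorem num_stem_loops_general (n : ℕ) :
    Set.ncard {S : Finset (ℕ × ℕ) | IsStemLoop n S} = 2 ^ (n - 2) - 1 := by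
  rw [← (injOn_foldEnds_setOf_isStemLoop n).ncard_image, image_foldEnds_setOf_isStemLoop,
    Set.ncard_coe_finset, card_erase_of_mem (by simp), card_powerset_filter_even, Nat.card_Icc]
  congr 2

/-- For every `n ≥ 2`, the number of stem-loop structures on `[1,n]` (θ = 1)
equals `2^(n−2) − 1`. -/
theorem num_stem_loops (n : ℕ) (hn : 2 ≤ n) :
    Set.ncard {S : Finset (ℕ × ℕ) | IsStemLoop n S} = 2 ^ (n - 2) - 1 :=
  num_stem_loops_general n
end

section
/- Let a₁, a₂, a₃ be the three (distinct) complex roots of the polynomial Q(z) = 1 − z − 2z³. Then for every integer n ≥ 3, the number of saturated stem-loop structures on [1,n] (with θ = 1) equals Σ_{i=1}^{3} a_i^{−n}/(1 + 6a_i²). (The right-hand side is the partial-fraction expansion of the rational generating function z/(1 − z − 2z³), using that Q′(z) = −1 − 6z².) -/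
/-- The number of saturated stem-loop structures on `[1,n]` (θ = 1). -/
noncomputable def numSatStemLoop (n : ℕ) : ℕ :=
  Set.ncard {S : Finset (ℕ × ℕ) | IsSaturated n S ∧ IsStemLoop n S}

namespace SecondaryStructure

def IsPair (n : ℕ) (p : ℕ × ℕ) : Prop :=
  1 ≤ p.1 ∧ p.1 + 1 < p.2 ∧ p.2 ≤ n

def Compatible (p q : ℕ × ℕ) : Prop :=
  (p.1 ≠ q.1 ∧ p.1 ≠ q.2 ∧ p.2 ≠ q.1 ∧ p.2 ≠ q.2) ∧
    ¬(p.1 < q.1 ∧ q.1 < p.2 ∧ p.2 < q.2) ∧ ¬(q.1 < p.1 ∧ p.1 < q.2 ∧ q.2 < p.2)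

theorem Compatible.symm {p q : ℕ × ℕ} (h : Compatible p q) : Compatible q p := by
  unfold Compatible at *; omega

instance : Std.Symm Compatible := ⟨fun _ _ => Compatible.symm⟩

theorem not_compatible_self (p : ℕ × ℕ) : ¬Compatible p p := by
  unfold Compatible; omega

theorem isSecStr_iff {n : ℕ} {S : Finset (ℕ × ℕ)} :
    IsSecStr n S ↔ (∀ p ∈ S, IsPair n p) ∧ (S : Set (ℕ × ℕ)).Pairwise Compatible := by
  constructor
  · rintro ⟨hpair, hends, hcross⟩
    exact ⟨hpair, fun p hp q hq hpq =>
      ⟨hends p hp q hq hpq, hcross p hp q hq, hcross q hq p hp⟩⟩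
  · rintro ⟨hpair, hcomp⟩
    refine ⟨hpair, fun p hp q hq hpq => (hcomp hp hq hpq).1, fun p hp q hq => ?_⟩
    rcases eq_or_ne p q with rfl | hpq
    · omega
    · exact (hcomp hp hq hpq).2.1

theorem isSecStr_insert_iff {n : ℕ} {S : Finset (ℕ × ℕ)} {p : ℕ × ℕ} :
    IsSecStr n (insert p S) ↔
      IsSecStr n S ∧ IsPair n p ∧ ∀ q ∈ S, p ≠ q → Compatible p q := by
  rw [isSecStr_iff, isSecStr_iff, Finset.coe_insert,
    Set.pairwise_insert_of_symm, Finset.forall_mem_insert]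
  simp only [Finset.mem_coe]
  tauto

theorem isSaturated_iff {n : ℕ} {S : Finset (ℕ × ℕ)} :
    IsSaturated n S ↔
      IsSecStr n S ∧ ∀ p, IsPair n p → p ∉ S → ∃ q ∈ S, ¬Compatible p q := by
  unfold IsSaturated
  refine and_congr_right fun hS => forall_congr' fun p => ?_
  rw [isSecStr_insert_iff]
  constructor
  · intro h hp hpS
    by_contra! hcomp
    exact h hpS ⟨hS, hp, fun q hq _ => hcomp q hq⟩
  · rintro h hpS ⟨-, hp, hcomp⟩
    obtain ⟨q, hq, hpq⟩ := h hp hpS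
    exact hpq (hcomp q hq (by rintro rfl; exact hpS hq))

theorem _root_.IsSaturated.not_forall_compatible {n : ℕ} {S : Finset (ℕ × ℕ)}
    (hS : IsSaturated n S) {p : ℕ × ℕ} (hp : IsPair n p) : ¬∀ q ∈ S, Compatible p q := by
  intro hfree
  obtain ⟨q, hq, hpq⟩ := (isSaturated_iff.1 hS).2 p hp
    (fun hpS => not_compatible_self p (hfree p hpS))
  exact hpq (hfree q hq)

def shift (k : ℕ) (S : Finset (ℕ × ℕ)) : Finset (ℕ × ℕ) :=
  S.image fun q => (q.1 + k, q.2 + k)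

theorem add_pair_injective (k : ℕ) : Function.Injective fun q : ℕ × ℕ => (q.1 + k, q.2 + k) :=
  fun p q h => by
    simp only [Prod.mk.injEq, add_left_inj] at h
    exact Prod.ext h.1 h.2

theorem shift_injective (k : ℕ) : Function.Injective (shift k) :=
  Finset.image_injective (add_pair_injective k)

theorem mem_shift {k : ℕ} {S : Finset (ℕ × ℕ)} {p : ℕ × ℕ} :
    p ∈ shift k S ↔ ∃ q ∈ S, (q.1 + k, q.2 + k) = p :=
  Finset.mem_image

theorem add_mem_shift {k : ℕ} {S : Finset (ℕ × ℕ)} {p : ℕ × ℕ} :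
    (p.1 + k, p.2 + k) ∈ shift k S ↔ p ∈ S :=
  (add_pair_injective k).mem_finset_image

theorem compatible_add_iff {k : ℕ} {p q : ℕ × ℕ} :
    Compatible (p.1 + k, p.2 + k) (q.1 + k, q.2 + k) ↔ Compatible p q := by
  unfold Compatible; dsimp only; omega

theorem pairwise_compatible_shift_iff {k : ℕ} {S : Finset (ℕ × ℕ)} :
    (shift k S : Set (ℕ × ℕ)).Pairwise Compatible ↔ (S : Set (ℕ × ℕ)).Pairwise Compatible := by
  rw [shift, Finset.coe_image, (add_pair_injective k).injOn.pairwise_image]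
  simp only [Set.Pairwise, Function.onFun, compatible_add_iff]

theorem exists_eq_shift {k : ℕ} {S : Finset (ℕ × ℕ)} (hS : ∀ q ∈ S, k ≤ q.1 ∧ k ≤ q.2) :
    ∃ S₀, S = shift k S₀ := by
  refine ⟨S.image fun q => (q.1 - k, q.2 - k), ?_⟩
  ext p
  simp only [shift, Finset.image_image, Finset.mem_image, Function.comp_def]
  constructor
  · intro hp
    exact ⟨p, hp, Prod.ext (Nat.sub_add_cancel (hS p hp).1) (Nat.sub_add_cancel (hS p hp).2)⟩
  · rintro ⟨q, hq, rfl⟩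
    rwa [Nat.sub_add_cancel (hS q hq).1, Nat.sub_add_cancel (hS q hq).2]

theorem isSecStr_shift {m n k : ℕ} {S : Finset (ℕ × ℕ)} (hS : IsSecStr m S) (hkm : k + m ≤ n) :
    IsSecStr n (shift k S) := by
  obtain ⟨hbd, hcomp⟩ := isSecStr_iff.1 hS
  refine isSecStr_iff.2 ⟨fun p hp => ?_, pairwise_compatible_shift_iff.2 hcomp⟩
  obtain ⟨q, hq, rfl⟩ := mem_shift.1 hp
  have := hbd q hq
  unfold IsPair at *; dsimp only; omega

def IsNested (S : Finset (ℕ × ℕ)) : Prop :=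
  ∃ p ∈ S, ∀ q ∈ S, q ≠ p → q.1 < p.1 ∧ p.2 < q.2

theorem isNested_shift_iff {k : ℕ} {S : Finset (ℕ × ℕ)} : IsNested (shift k S) ↔ IsNested S := by
  constructor
  · rintro ⟨_, hp', hin⟩
    obtain ⟨p, hp, rfl⟩ := mem_shift.1 hp'
    refine ⟨p, hp, fun q hq hqp => ?_⟩
    have := hin _ (add_mem_shift.2 hq) (by simpa [Prod.ext_iff] using hqp)
    dsimp only at this; omega
  · rintro ⟨p, hp, hin⟩
    refine ⟨_, add_mem_shift.2 hp, fun q' hq' hqp => ?_⟩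
    obtain ⟨q, hq, rfl⟩ := mem_shift.1 hq'
    have := hin q hq (by rintro rfl; exact hqp rfl)
    dsimp only; omega

theorem IsNested.insert {S : Finset (ℕ × ℕ)} (hS : IsNested S) {o : ℕ × ℕ}
    (ho : ∀ q ∈ S, o.1 < q.1 ∧ q.2 < o.2) : IsNested (insert o S) := by
  obtain ⟨p, hp, hin⟩ := hS
  refine ⟨p, Finset.mem_insert_of_mem hp, fun q hq hqp => ?_⟩
  rcases Finset.mem_insert.1 hq with rfl | hq
  · exact ho p hp
  · exact hin q hq hqp

theorem IsNested.erase {S : Finset (ℕ × ℕ)} (hS : IsNested S) {o : ℕ × ℕ}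
    (ho : ∀ q ∈ S, o.1 ≤ q.1) (hne : (S.erase o).Nonempty) : IsNested (S.erase o) := by
  obtain ⟨p, hp, hin⟩ := hS
  obtain ⟨q, hq⟩ := hne
  have hpo : p ≠ o := by
    rintro rfl
    have := hin q (Finset.mem_of_mem_erase hq) (Finset.ne_of_mem_erase hq)
    have := ho q (Finset.mem_of_mem_erase hq)
    omega
  exact ⟨p, Finset.mem_erase.2 ⟨hpo, hp⟩, fun q hq => hin q (Finset.mem_of_mem_erase hq)⟩

theorem IsNested.exists_outermost {n : ℕ} {S : Finset (ℕ × ℕ)} (hS : IsNested S)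
    (hsec : IsSecStr n S) : ∃ o ∈ S, ∀ q ∈ S, o.1 ≤ q.1 ∧ q.2 ≤ o.2 := by
  obtain ⟨p, hp, hin⟩ := hS
  have hcomp := (isSecStr_iff.1 hsec).2
  obtain ⟨o, ho, hmin⟩ := S.exists_min_image Prod.fst ⟨p, hp⟩
  refine ⟨o, ho, fun q hq => ⟨hmin q hq, ?_⟩⟩
  rcases eq_or_ne q o with rfl | hqo
  · exact le_rfl
  have hoq := hcomp ho hq hqo.symm
  have := hmin p hp
  have := hmin q hq
  by_cases hqp : q = p
  · subst hqp
    have := hin o ho hqo.symm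
    omega
  · have := hin q hq hqp
    have := hin o ho (by rintro rfl; omega)
    have := hsec.1 p hp
    unfold Compatible at hoq
    omega

theorem _root_.IsSaturated.extend_shift {m n k : ℕ} {S T : Finset (ℕ × ℕ)}
    (hS : IsSaturated m S) (hT : IsSecStr n T) (hST : shift k S ⊆ T)
    (hwin : ∀ p, IsPair n p → (∀ q ∈ T, Compatible p q) → k < p.1 ∧ p.2 ≤ k + m) :
    IsSaturated n T := by
  refine isSaturated_iff.2 ⟨hT, fun p hp hpT => ?_⟩
  by_contra! hfree
  obtain ⟨hk, hkm⟩ := hwin p hp hfree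
  unfold IsPair at hp
  have hpk : (p.1 - k + k, p.2 - k + k) = p := Prod.ext (by omega) (by omega)
  have hp₀ : IsPair m (p.1 - k, p.2 - k) := by unfold IsPair; omega
  obtain ⟨q, hq, hpq⟩ := (isSaturated_iff.1 hS).2 _ hp₀ fun h =>
    hpT (hpk ▸ hST (add_mem_shift.2 h))
  have := hfree _ (hST (add_mem_shift.2 hq))
  rw [← hpk, compatible_add_iff (p := (p.1 - k, p.2 - k))] at this
  exact hpq this

theorem _root_.IsSaturated.restrict_shift {m n k : ℕ} {S T : Finset (ℕ × ℕ)}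
    (hT : IsSaturated n T) (hS : IsSecStr m S) (hkm : k + m ≤ n)
    (hrest : ∀ q ∈ T, q ∉ shift k S → ∀ p, IsPair m p → Compatible (p.1 + k, p.2 + k) q) :
    IsSaturated m S := by
  refine isSaturated_iff.2 ⟨hS, fun p hp hpS => ?_⟩
  have hpk : IsPair n (p.1 + k, p.2 + k) := by unfold IsPair at hp ⊢; omega
  have hpT : (p.1 + k, p.2 + k) ∉ T := fun h => by
    by_cases hsh : (p.1 + k, p.2 + k) ∈ shift k S
    · exact hpS (add_mem_shift.1 hsh)
    · exact not_compatible_self _ (hrest _ h hsh p hp)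
  obtain ⟨q, hq, hpq⟩ := (isSaturated_iff.1 hT).2 _ hpk hpT
  by_cases hsh : q ∈ shift k S
  · obtain ⟨q₀, hq₀, rfl⟩ := mem_shift.1 hsh
    exact ⟨q₀, hq₀, fun h => hpq (compatible_add_iff.2 h)⟩
  · exact absurd (hrest q hq hsh p hp) hpq

def satStemLoops (n : ℕ) : Set (Finset (ℕ × ℕ)) :=
  {S | IsSaturated n S ∧ IsStemLoop n S}

def closedSatStemLoops (n : ℕ) : Set (Finset (ℕ × ℕ)) :=
  {S | S ∈ satStemLoops n ∧ (1, n) ∈ S}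

noncomputable def numClosedSatStemLoop (n : ℕ) : ℕ :=
  (closedSatStemLoops n).ncard

theorem mem_satStemLoops {n : ℕ} {S : Finset (ℕ × ℕ)} :
    S ∈ satStemLoops n ↔ IsSaturated n S ∧ IsSecStr n S ∧ IsNested S :=
  Iff.rfl

theorem mem_closedSatStemLoops {n : ℕ} {S : Finset (ℕ × ℕ)} :
    S ∈ closedSatStemLoops n ↔ S ∈ satStemLoops n ∧ (1, n) ∈ S :=
  Iff.rfl

def enclose (n : ℕ) (S : Finset (ℕ × ℕ)) : Finset (ℕ × ℕ) :=
  insert (1, n + 2) (shift 1 S)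

theorem satStemLoops_finite (n : ℕ) : (satStemLoops n).Finite := by
  refine (Finset.Icc 1 n ×ˢ Finset.Icc 1 n).powerset.finite_toSet.subset fun S hS => ?_
  rw [Finset.mem_coe, Finset.mem_powerset]
  intro q hq
  have := hS.1.1.1 q hq
  simp only [Finset.mem_product, Finset.mem_Icc]
  omega

theorem satStemLoops_eq_empty {n : ℕ} (hn : n ≤ 2) : satStemLoops n = ∅ := by
  refine Set.eq_empty_of_forall_notMem fun S ⟨_, hsec, p, hp, _⟩ => ?_
  have := hsec.1 p hp
  omega

theorem closedSatStemLoops_eq_empty {n : ℕ} (hn : n ≤ 2) : closedSatStemLoops n = ∅ :=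
  Set.eq_empty_of_subset_empty fun _ hS => satStemLoops_eq_empty hn ▸ hS.1

theorem three_le_of_mem_closedSatStemLoops {m : ℕ} {S : Finset (ℕ × ℕ)}
    (hS : S ∈ closedSatStemLoops m) : 3 ≤ m := by
  have := (mem_satStemLoops.1 hS.1).2.1.1 _ hS.2
  omega

theorem shift_mem_satStemLoops {m e f : ℕ} {S : Finset (ℕ × ℕ)} (hS : S ∈ closedSatStemLoops m)
    (he : e ≤ 2) (hf : f ≤ 2) (hef : e = 0 ∨ f = 0) : shift e S ∈ satStemLoops (e + m + f) := by
  have hm := three_le_of_mem_closedSatStemLoops hS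
  obtain ⟨hS, hclosed⟩ := mem_closedSatStemLoops.1 hS
  obtain ⟨hsat, hsec, hnest⟩ := mem_satStemLoops.1 hS
  have hsec' : IsSecStr (e + m + f) (shift e S) := isSecStr_shift hsec (by omega)
  refine ⟨hsat.extend_shift hsec' subset_rfl fun p hp hfree => ?_, hsec',
    isNested_shift_iff.2 hnest⟩
  have := hfree _ (add_mem_shift.2 hclosed)
  unfold Compatible IsPair at *; dsimp only at *; omega

theorem exists_eq_shift_of_mem_satStemLoops {n : ℕ} {S : Finset (ℕ × ℕ)}
    (hS : S ∈ satStemLoops n) : ∃ e f m, e ≤ 2 ∧ f ≤ 2 ∧ (e = 0 ∨ f = 0) ∧ e + m + f = n ∧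
      ∃ S₀ ∈ closedSatStemLoops m, S = shift e S₀ := by
  obtain ⟨hsat, hsec, hnest⟩ := mem_satStemLoops.1 hS
  obtain ⟨o, ho, hout⟩ := hnest.exists_outermost hsec
  obtain ⟨hbd, hcomp⟩ := isSecStr_iff.1 hsec
  have hop := hbd o ho
  unfold IsPair at hop
  -- a legal pair beside or around `o` could be added to `S`
  have hfree : ∀ p, IsPair n p → p.2 < o.1 ∨ o.2 < p.1 ∨ (p.1 < o.1 ∧ o.2 < p.2) → False :=
    fun p hp hpo => hsat.not_forall_compatible hp fun q hq => by
      have := hout q hq; have := hbd q hq; unfold Compatible IsPair at *; omega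
  have hleft : o.1 ≤ 3 := by
    by_contra; exact hfree (1, 3) (by unfold IsPair; omega) (by omega)
  have hright : n ≤ o.2 + 2 := by
    by_contra; exact hfree (n - 2, n) (by unfold IsPair; dsimp only; omega) (by omega)
  have hgap : o.1 = 1 ∨ o.2 = n := by
    by_contra; exact hfree (1, n) (by unfold IsPair; omega) (by omega)
  obtain ⟨S₀, rfl⟩ := exists_eq_shift (k := o.1 - 1) (S := S) fun q hq => by
    have := hout q hq; have := hbd q hq; unfold IsPair at this; omega
  have hsec₀ : IsSecStr (o.2 + 1 - o.1) S₀ := by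
    refine isSecStr_iff.2 ⟨fun q hq => ?_, pairwise_compatible_shift_iff.1 hcomp⟩
    have := hout _ (add_mem_shift.2 hq); have := hbd _ (add_mem_shift.2 hq)
    unfold IsPair at *; dsimp only at *; omega
  have hclosed : (1, o.2 + 1 - o.1) ∈ S₀ := by
    rw [← add_mem_shift (k := o.1 - 1)]
    convert ho using 1
    exact Prod.ext (by dsimp only; omega) (by dsimp only; omega)
  refine ⟨o.1 - 1, n - o.2, o.2 + 1 - o.1, by omega, by omega, by omega, by omega, S₀,
    ⟨⟨?_, hsec₀, isNested_shift_iff.1 hnest⟩, hclosed⟩, rfl⟩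
  exact hsat.restrict_shift hsec₀ (by omega) fun q hq hq' => absurd hq hq'

theorem enclose_mem_closedSatStemLoops {m : ℕ} {S : Finset (ℕ × ℕ)} (hS : S ∈ satStemLoops m) :
    enclose m S ∈ closedSatStemLoops (m + 2) := by
  obtain ⟨hsat, hsec, hnest⟩ := mem_satStemLoops.1 hS
  obtain ⟨c, hc, -⟩ := id hnest
  have hm := hsec.1 c hc
  have hinside : ∀ q ∈ shift 1 S, 1 < q.1 ∧ q.1 < q.2 ∧ q.2 < m + 2 := fun q' hq' => by
    obtain ⟨q, hq, rfl⟩ := mem_shift.1 hq'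
    have := hsec.1 q hq
    dsimp only; omega
  have hsec' : IsSecStr (m + 2) (enclose m S) :=
    isSecStr_insert_iff.2 ⟨isSecStr_shift hsec (by omega), by unfold IsPair; dsimp only; omega,
      fun q hq _ => by have := hinside q hq; unfold Compatible; dsimp only; omega⟩
  refine ⟨⟨hsat.extend_shift hsec' (Finset.subset_insert _ _) fun p hp hfree => ?_, hsec',
    (isNested_shift_iff.2 hnest).insert fun q hq => ⟨(hinside q hq).1, (hinside q hq).2.2⟩⟩,
    Finset.mem_insert_self _ _⟩
  have := hfree _ (Finset.mem_insert_self _ _)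
  unfold Compatible IsPair at *; dsimp only at *; omega

theorem eq_singleton_or_enclose_of_mem_closedSatStemLoops {m : ℕ} {T : Finset (ℕ × ℕ)}
    (hT : T ∈ closedSatStemLoops (m + 2)) :
    T = {(1, m + 2)} ∨ ∃ S ∈ satStemLoops m, T = enclose m S := by
  obtain ⟨hT, hclosed⟩ := mem_closedSatStemLoops.1 hT
  obtain ⟨hsat, hsec, hnest⟩ := mem_satStemLoops.1 hT
  obtain ⟨hbd, hcomp⟩ := isSecStr_iff.1 hsec
  rcases (T.erase (1, m + 2)).eq_empty_or_nonempty with hemp | hne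
  · exact Or.inl ((Finset.erase_eq_empty_iff _ _).1 hemp |>.resolve_left
      (Finset.ne_empty_of_mem hclosed))
  right
  have hinside : ∀ q ∈ T.erase (1, m + 2), 1 < q.1 ∧ q.2 < m + 2 := fun q hq => by
    have := hcomp (Finset.mem_of_mem_erase hq) hclosed (Finset.ne_of_mem_erase hq)
    have := hbd q (Finset.mem_of_mem_erase hq)
    unfold Compatible IsPair at *; dsimp only at *; omega
  obtain ⟨S, hS⟩ := exists_eq_shift (k := 1) fun q hq => by
    have := hinside q hq; have := hbd q (Finset.mem_of_mem_erase hq); unfold IsPair at this; omega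
  have hTS : T = enclose m S := by rw [enclose, ← hS, Finset.insert_erase hclosed]
  have hsecS : IsSecStr m S := by
    refine isSecStr_iff.2 ⟨fun q hq => ?_, (pairwise_compatible_shift_iff (k := 1)).1 ?_⟩
    · have := hinside _ (hS ▸ add_mem_shift.2 hq)
      have := hbd _ (Finset.mem_of_mem_erase (hS ▸ add_mem_shift.2 hq))
      unfold IsPair at *; dsimp only at *; omega
    · exact hS ▸ hcomp.mono (Finset.coe_subset.2 (Finset.erase_subset _ _))
  refine ⟨S, ⟨hsat.restrict_shift (k := 1) hsecS (by omega) fun q hq hq' p hp => ?_, hsecS, ?_⟩,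
    hTS⟩
  · rw [hTS, enclose, Finset.mem_insert] at hq
    rw [hq.resolve_right hq']
    unfold Compatible IsPair at *; dsimp only; omega
  · exact isNested_shift_iff.1 (hS ▸ hnest.erase (fun q hq => (hbd q hq).1) hne)

theorem singleton_mem_closedSatStemLoops_iff {n : ℕ} :
    {(1, n)} ∈ closedSatStemLoops n ↔ n = 3 ∨ n = 4 := by
  constructor
  · intro h
    obtain ⟨hsat, hsec, -⟩ := mem_satStemLoops.1 h.1
    have := hsec.1 _ (Finset.mem_singleton_self _)
    by_contra
    refine hsat.not_forall_compatible (p := (2, 4)) (by unfold IsPair; dsimp only at *; omega)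
      fun q hq => ?_
    rw [Finset.mem_singleton.1 hq]
    unfold Compatible; dsimp only at *; omega
  · intro hn
    have hsec : IsSecStr n {(1, n)} := isSecStr_iff.2
      ⟨fun q hq => by rw [Finset.mem_singleton.1 hq]; unfold IsPair; omega, by simp⟩
    refine ⟨⟨isSaturated_iff.2 ⟨hsec, fun p hp hpS => ⟨_, Finset.mem_singleton_self _, ?_⟩⟩,
      hsec, _, Finset.mem_singleton_self _, fun q hq hne => absurd (Finset.mem_singleton.1 hq) hne⟩,
      Finset.mem_singleton_self _⟩
    rw [Finset.mem_singleton, Prod.ext_iff] at hpS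
    unfold Compatible IsPair at *; dsimp only at *; omega

theorem numClosedSatStemLoop_add_two {m : ℕ} (hm : 3 ≤ m) :
    numClosedSatStemLoop (m + 2) = numSatStemLoop m := by
  have himage : closedSatStemLoops (m + 2) = enclose m '' satStemLoops m := by
    ext T
    refine ⟨fun hT => ?_, ?_⟩
    · rcases eq_singleton_or_enclose_of_mem_closedSatStemLoops hT with rfl | ⟨S, hS, rfl⟩
      · have := singleton_mem_closedSatStemLoops_iff.1 hT
        omega
      · exact ⟨S, hS, rfl⟩
    · rintro ⟨S, hS, rfl⟩
      exact enclose_mem_closedSatStemLoops hS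
  have hnotin : ∀ S ∈ satStemLoops m, (1, m + 2) ∉ shift 1 S := fun S hS h => by
    obtain ⟨q, hq, hq'⟩ := mem_shift.1 h
    have := (mem_satStemLoops.1 hS).2.1.1 q hq
    simp only [Prod.mk.injEq] at hq'
    omega
  rw [numClosedSatStemLoop, himage]
  refine Set.InjOn.ncard_image fun S hS S' hS' h => shift_injective 1 ?_
  have := congrArg (Finset.erase · (1, m + 2)) h
  simpa only [enclose, Finset.erase_insert (hnotin S hS), Finset.erase_insert (hnotin S' hS')]
    using this

theorem numClosedSatStemLoop_eq_zero {n : ℕ} (hn : n ≤ 2) : numClosedSatStemLoop n = 0 := by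
  rw [numClosedSatStemLoop, closedSatStemLoops_eq_empty hn, Set.ncard_empty]

theorem numClosedSatStemLoop_eq_one {n : ℕ} (hn : n = 3 ∨ n = 4) :
    numClosedSatStemLoop n = 1 := by
  have : closedSatStemLoops n = {{(1, n)}} := by
    ext T
    rw [Set.mem_singleton_iff]
    refine ⟨fun hT => ?_, fun h => h ▸ singleton_mem_closedSatStemLoops_iff.2 hn⟩
    obtain ⟨m, rfl⟩ : ∃ m, n = m + 2 := ⟨n - 2, by omega⟩
    rcases eq_singleton_or_enclose_of_mem_closedSatStemLoops hT with h | ⟨S, hS, -⟩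
    · exact h
    · rw [satStemLoops_eq_empty (by omega)] at hS
      exact absurd hS (Set.notMem_empty S)
  rw [numClosedSatStemLoop, this, Set.ncard_singleton]

/-- The possible sizes `(e, f)` of the unpaired ends left and right of a saturated stem-loop. -/
def endGaps : Finset (ℕ × ℕ) :=
  {(0, 0), (1, 0), (0, 1), (2, 0), (0, 2)}

theorem mem_endGaps {g : ℕ × ℕ} : g ∈ endGaps ↔ g.1 ≤ 2 ∧ g.2 ≤ 2 ∧ (g.1 = 0 ∨ g.2 = 0) := by
  obtain ⟨e, f⟩ := g
  simp only [endGaps, Finset.mem_insert, Finset.mem_singleton, Prod.mk.injEq]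
  omega

theorem satStemLoops_eq_biUnion (n : ℕ) : satStemLoops n =
    ⋃ g ∈ (endGaps : Set (ℕ × ℕ)), shift g.1 '' closedSatStemLoops (n - g.1 - g.2) := by
  ext S
  simp only [Set.mem_iUnion, Set.mem_image, exists_prop, Finset.mem_coe, mem_endGaps]
  constructor
  · intro hS
    obtain ⟨e, f, m, he, hf, hef, rfl, S₀, hS₀, rfl⟩ := exists_eq_shift_of_mem_satStemLoops hS
    exact ⟨(e, f), ⟨he, hf, hef⟩, S₀, by rwa [show e + m + f - e - f = m by omega], rfl⟩
  · rintro ⟨⟨e, f⟩, ⟨he, hf, hef⟩, S₀, hS₀, rfl⟩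
    have := three_le_of_mem_closedSatStemLoops hS₀
    have := shift_mem_satStemLoops hS₀ he hf hef
    rwa [show e + (n - e - f) + f = n by omega] at this

theorem pairwiseDisjoint_endGaps (n : ℕ) : (endGaps : Set (ℕ × ℕ)).PairwiseDisjoint
    fun g => shift g.1 '' closedSatStemLoops (n - g.1 - g.2) := by
  rintro ⟨e, f⟩ - ⟨e', f'⟩ - hne
  refine Set.disjoint_left.2 ?_
  rintro _ ⟨S, hS, rfl⟩ ⟨S', hS', h⟩
  -- each side contains the closing pair of the other and lies within its own
  have hm := three_le_of_mem_closedSatStemLoops hS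
  obtain ⟨q, hq, hqe⟩ := mem_shift.1 (h ▸ add_mem_shift.2 hS'.2)
  obtain ⟨q', hq', hqe'⟩ := mem_shift.1 (h.symm ▸ add_mem_shift.2 hS.2)
  have := (mem_satStemLoops.1 hS.1).2.1.1 q hq
  have := (mem_satStemLoops.1 hS'.1).2.1.1 q' hq'
  simp only [Prod.mk.injEq, ne_eq] at hqe hqe' hne this
  omega

theorem numSatStemLoop_add_two (n : ℕ) : numSatStemLoop (n + 2) =
    numClosedSatStemLoop (n + 2) + 2 * numClosedSatStemLoop (n + 1) +
      2 * numClosedSatStemLoop n := by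
  change (satStemLoops (n + 2)).ncard = _
  rw [satStemLoops_eq_biUnion, Set.Finite.ncard_biUnion (Finset.finite_toSet _)
    (fun g _ => ((satStemLoops_finite _).subset fun _ h => h.1).image _)
    (pairwiseDisjoint_endGaps _), finsum_mem_coe_finset]
  simp only [endGaps, Set.ncard_image_of_injective _ (shift_injective _), Finset.mem_insert,
    Prod.mk.injEq, zero_ne_one, and_true, and_false, OfNat.zero_ne_ofNat, Finset.mem_singleton,
    or_self, not_false_eq_true, Finset.sum_insert, tsub_zero, one_ne_zero, and_self,
    OfNat.one_ne_ofNat, Nat.add_one_sub_one, OfNat.ofNat_ne_zero, add_tsub_cancel_right,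
    Finset.sum_singleton, numClosedSatStemLoop]
  ring

theorem numSatStemLoop_add_seven (n : ℕ) : numSatStemLoop (n + 7) =
    numSatStemLoop (n + 5) + 2 * numSatStemLoop (n + 4) + 2 * numSatStemLoop (n + 3) := by
  have := numSatStemLoop_add_two (n + 5)
  rw [numClosedSatStemLoop_add_two (m := n + 5) (by omega),
    numClosedSatStemLoop_add_two (m := n + 4) (by omega),
    numClosedSatStemLoop_add_two (m := n + 3) (by omega)] at this
  exact this

theorem numSatStemLoop_three_to_six : numSatStemLoop 3 = 1 ∧ numSatStemLoop 4 = 3 ∧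
    numSatStemLoop 5 = 5 ∧ numSatStemLoop 6 = 7 := by
  have h3 := numSatStemLoop_add_two 1
  have h4 := numSatStemLoop_add_two 2
  have h5 := numSatStemLoop_add_two 3
  have h6 := numSatStemLoop_add_two 4
  rw [numClosedSatStemLoop_add_two (m := 3) le_rfl] at h5 h6
  rw [numClosedSatStemLoop_add_two (m := 4) (by norm_num)] at h6
  simp only [Nat.reduceAdd, numClosedSatStemLoop_eq_zero (show 1 ≤ 2 by norm_num),
    numClosedSatStemLoop_eq_zero (show 2 ≤ 2 by norm_num),
    numClosedSatStemLoop_eq_one (show 3 = 3 ∨ 3 = 4 by norm_num),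
    numClosedSatStemLoop_eq_one (show 4 = 3 ∨ 4 = 4 by norm_num)] at h3 h4 h5 h6
  omega

end SecondaryStructure

section CubicRoots

variable {K : Type*} [Field K]

theorem one_add_six_sq_eq_of_roots {x y z : K} (hxy : x ≠ y) (hxz : x ≠ z) (hyz : y ≠ z)
    (hx : 1 - x - 2 * x ^ 3 = 0) (hy : 1 - y - 2 * y ^ 3 = 0) (hz : 1 - z - 2 * z ^ 3 = 0) :
    1 + 6 * x ^ 2 = 2 * ((x - y) * (x - z)) := by
  have hxy' : 1 + 2 * (x ^ 2 + x * y + y ^ 2) = 0 := by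
    have : (y - x) * (1 + 2 * (x ^ 2 + x * y + y ^ 2)) = 0 := by linear_combination hx - hy
    exact (mul_eq_zero.1 this).resolve_left (sub_ne_zero.2 hxy.symm)
  have hxz' : 1 + 2 * (x ^ 2 + x * z + z ^ 2) = 0 := by
    have : (z - x) * (1 + 2 * (x ^ 2 + x * z + z ^ 2)) = 0 := by linear_combination hx - hz
    exact (mul_eq_zero.1 this).resolve_left (sub_ne_zero.2 hxz.symm)
  have hsum : 2 * (x + y + z) = 0 := by
    have : (y - z) * (2 * (x + y + z)) = 0 := by linear_combination hxy' - hxz'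
    exact (mul_eq_zero.1 this).resolve_left (sub_ne_zero.2 hyz)
  linear_combination hxy' + (x - y) * hsum

theorem sum_pow_div_one_add_six_sq_of_roots [NeZero (2 : K)] {x y z : K}
    (hxy : x ≠ y) (hxz : x ≠ z) (hyz : y ≠ z)
    (hx : 1 - x - 2 * x ^ 3 = 0) (hy : 1 - y - 2 * y ^ 3 = 0) (hz : 1 - z - 2 * z ^ 3 = 0)
    {k : ℕ} (hk : k ≤ 2) :
    x ^ k / (1 + 6 * x ^ 2) + y ^ k / (1 + 6 * y ^ 2) + z ^ k / (1 + 6 * z ^ 2) =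
      if k = 2 then 1 / 2 else 0 := by
  rw [one_add_six_sq_eq_of_roots hxy hxz hyz hx hy hz,
    one_add_six_sq_eq_of_roots hxy.symm hyz hxz hy hx hz,
    one_add_six_sq_eq_of_roots hxz.symm hyz.symm hxy hz hx hy]
  have := sub_ne_zero.2 hxy
  have := sub_ne_zero.2 hxz
  have := sub_ne_zero.2 hyz
  interval_cases k <;> simp only [Nat.reduceEqDiff, if_true, if_false] <;> field_simp <;> ring

theorem zpow_neg_add_three_of_root {x : K} (hx : 1 - x - 2 * x ^ 3 = 0) (k : ℤ) :
    x ^ (-(k + 3)) = x ^ (-(k + 2)) + 2 * x ^ (-k) := by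
  have hx0 : x ≠ 0 := by rintro rfl; norm_num at hx
  have h2 : x ^ (-(k + 2)) = x ^ (-(k + 3)) * x := by
    rw [← zpow_add_one₀ hx0]; ring_nf
  have h3 : x ^ (-k) = x ^ (-(k + 3)) * x ^ 3 := by
    rw [← zpow_natCast, ← zpow_add₀ hx0]; ring_nf
  rw [h2, h3]
  linear_combination x ^ (-(k + 3)) * hx

def rootSum (a : Fin 3 → K) (k : ℤ) : K :=
  ∑ i, a i ^ (-k) / (1 + 6 * a i ^ 2)

theorem rootSum_eq {a : Fin 3 → K} (hroot : ∀ i, 1 - a i - 2 * a i ^ 3 = 0) (k : ℤ) :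
    rootSum a k = rootSum a (k - 1) + 2 * rootSum a (k - 3) := by
  simp only [rootSum, Finset.mul_sum, ← Finset.sum_add_distrib]
  refine Finset.sum_congr rfl fun i _ => ?_
  rw [← sub_add_cancel k 3, zpow_neg_add_three_of_root (hroot i)]
  ring_nf

theorem rootSum_neg_natCast [NeZero (2 : K)] {a : Fin 3 → K} (hinj : Function.Injective a)
    (hroot : ∀ i, 1 - a i - 2 * a i ^ 3 = 0) {k : ℕ} (hk : k ≤ 2) :
    rootSum a (-k) = if k = 2 then 1 / 2 else 0 := by
  simp only [rootSum, neg_neg, zpow_natCast, Fin.sum_univ_three]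
  exact sum_pow_div_one_add_six_sq_of_roots (hinj.ne (by decide)) (hinj.ne (by decide))
    (hinj.ne (by decide)) (hroot 0) (hroot 1) (hroot 2) hk

theorem rootSum_three_to_six [NeZero (2 : K)] {a : Fin 3 → K} (hinj : Function.Injective a)
    (hroot : ∀ i, 1 - a i - 2 * a i ^ 3 = 0) :
    rootSum a 3 = 1 ∧ rootSum a 4 = 3 ∧ rootSum a 5 = 5 ∧ rootSum a 6 = 7 := by
  have hneg {k : ℕ} (hk : k ≤ 2) := rootSum_neg_natCast hinj hroot hk
  have g0 : rootSum a 0 = 0 := by simpa using hneg (k := 0) (by norm_num)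
  have gm1 : rootSum a (-1) = 0 := by simpa using hneg (k := 1) (by norm_num)
  have gm2 : 2 * rootSum a (-2) = 1 := by
    have := hneg (k := 2) le_rfl
    norm_num at this
    rw [this, mul_inv_cancel₀ two_ne_zero]
  have g1 : rootSum a 1 = 1 := by rw [rootSum_eq hroot]; norm_num [g0, gm2]
  have g2 : rootSum a 2 = 1 := by rw [rootSum_eq hroot]; norm_num [g1, gm1]
  have g3 : rootSum a 3 = 1 := by rw [rootSum_eq hroot]; norm_num [g2, g0]
  have g4 : rootSum a 4 = 3 := by rw [rootSum_eq hroot]; norm_num [g3, g1]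
  have g5 : rootSum a 5 = 5 := by rw [rootSum_eq hroot]; norm_num [g4, g2]
  have g6 : rootSum a 6 = 7 := by rw [rootSum_eq hroot]; norm_num [g5, g3]
  exact ⟨g3, g4, g5, g6⟩

theorem rootSum_add_seven {a : Fin 3 → K} (hroot : ∀ i, 1 - a i - 2 * a i ^ 3 = 0) (n : ℤ) :
    rootSum a (n + 7) = rootSum a (n + 5) + 2 * rootSum a (n + 4) + 2 * rootSum a (n + 3) := by
  have h7 := rootSum_eq hroot (n + 7)
  have h6 := rootSum_eq hroot (n + 6)
  ring_nf at h7 h6 ⊢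
  linear_combination h7 + h6

end CubicRoots

theorem eq_of_add_four_eq {R : Type*} [CommSemiring R] {u v : ℕ → R}
    (hu : ∀ n, u (n + 4) = u (n + 2) + 2 * u (n + 1) + 2 * u n)
    (hv : ∀ n, v (n + 4) = v (n + 2) + 2 * v (n + 1) + 2 * v n)
    (hinit : ∀ n < 4, u n = v n) : u = v := by
  let E : LinearRecurrence R := ⟨4, ![2, 2, 1, 0]⟩
  have hsol (w : ℕ → R) (hw : ∀ n, w (n + 4) = w (n + 2) + 2 * w (n + 1) + 2 * w n) :
      E.IsSolution w := fun n => by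
    simp only [hw, Fin.sum_univ_four, Fin.isValue, Matrix.cons_val_zero, Fin.coe_ofNat_eq_mod,
      Nat.zero_mod, add_zero, Matrix.cons_val_one, Nat.one_mod, Matrix.cons_val, Nat.reduceMod,
      one_mul, Nat.mod_succ, zero_mul, E]
    ring
  exact (E.eq_iff_eqOn_range_order u v (hsol u hu) (hsol v hv)).2 fun n hn =>
    hinit n (Finset.mem_range.1 hn)

open SecondaryStructure in
/-- If `a₁, a₂, a₃` are the three distinct complex roots of `Q(z) = 1 − z − 2z³`, then
for every `n ≥ 3` the number of saturated stem-loops on `[1,n]` equals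
`Σᵢ aᵢ⁻ⁿ/(1 + 6aᵢ²)` (the partial-fraction expansion of `z/(1 − z − 2z³)`,
using `Q′(z) = −1 − 6z²`). -/
theorem sat_stem_loop_exact_formula (a : Fin 3 → ℂ)
    (hinj : Function.Injective a)
    (hroot : ∀ i : Fin 3, 1 - a i - 2 * a i ^ 3 = 0) :
    ∀ n : ℕ, 3 ≤ n →
      (numSatStemLoop n : ℂ) = ∑ i : Fin 3, (a i) ^ (-(n : ℤ)) / (1 + 6 * a i ^ 2) := by
  have key : (fun k => (numSatStemLoop (k + 3) : ℂ)) = fun k : ℕ => rootSum a (k + 3) := by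
    refine eq_of_add_four_eq (fun n => ?_) (fun n => ?_) fun n hn => ?_
    · rw [show n + 4 + 3 = n + 7 by ring, numSatStemLoop_add_seven]
      push_cast
      ring_nf
    · have h := rootSum_add_seven hroot n
      push_cast
      ring_nf at h ⊢
      linear_combination h
    · obtain ⟨a3, a4, a5, a6⟩ := numSatStemLoop_three_to_six
      obtain ⟨g3, g4, g5, g6⟩ := rootSum_three_to_six hinj hroot
      interval_cases n <;> simp [a3, a4, a5, a6, g3, g4, g5, g6]
  intro n hn
  obtain ⟨k, rfl⟩ := Nat.exists_eq_add_of_le' hn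
  exact (congrFun key k).trans (by push_cast; rfl)
end

section
/- Fix an integer θ ≥ 1 and define the sequence (U_n)_{n≥0} of rationals by U_n = 0 for 0 ≤ n ≤ θ + 1, and U_n = 1 + (1/(n − θ − 1)) · Σ_{k=θ}^{n−2} (U_k + U_{n−k−2}) for n ≥ θ + 2. Then for every n ≥ θ + 1 the recurrence (n − θ)·U_{n+1} = 1 + (n − θ − 1)·U_n + U_{n−1} + U_{n−θ−1} holds. -/
/-!
Write `S m = ∑_{k=θ}^{m} (U_k + U_{m-k})`, so that the defining recurrence says
`(m + 1 − θ)(U_{m+2} − 1) = S m`. Reflecting the second half of the sum turns it into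
`∑_{k=θ}^{m} U_k + ∑_{j<m+1−θ} U_j`, and in this form `S (m + 1) − S m = U_{m+1} + U_{m+1−θ}`.
Subtracting the recurrence at consecutive indices gives the claim.
-/

open Finset

section Reflect

variable {M : Type*} [AddCommMonoid M]

theorem sum_Icc_add_reflect (f : ℕ → M) (a m : ℕ) :
    ∑ k ∈ Icc a m, (f k + f (m - k)) = ∑ k ∈ Icc a m, f k + ∑ j ∈ range (m + 1 - a), f j := by
  rw [sum_add_distrib, ← Ico_add_one_right_eq_Icc, sum_Ico_reflect f a le_rfl, Nat.sub_self,
    Nat.Ico_zero_eq_range]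

theorem sum_Icc_succ_add_reflect (f : ℕ → M) {a m : ℕ} (h : a ≤ m + 1) :
    ∑ k ∈ Icc a (m + 1), (f k + f (m + 1 - k))
      = ∑ k ∈ Icc a m, (f k + f (m - k)) + f (m + 1) + f (m + 1 - a) := by
  rw [sum_Icc_add_reflect, sum_Icc_add_reflect, sum_Icc_succ_top h, Nat.sub_add_comm h,
    sum_range_succ]
  abel

end Reflect

theorem mul_sub_one_eq_sum_of_rec (θ : ℕ) (U : ℕ → ℚ)
    (hrec : ∀ n : ℕ, θ + 2 ≤ n →
      U n = 1 + (1 / ((n : ℚ) - θ - 1)) *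
        ∑ k ∈ Finset.Icc θ (n - 2), (U k + U (n - k - 2)))
    {m : ℕ} (hm : θ ≤ m) :
    ((m : ℚ) + 1 - θ) * (U (m + 2) - 1) = ∑ k ∈ Icc θ m, (U k + U (m - k)) := by
  have hpos : (0 : ℚ) < (m : ℚ) + 1 - θ := by
    have : (θ : ℚ) ≤ m := by exact_mod_cast hm
    linarith
  have hsum : ∑ k ∈ Icc θ (m + 2 - 2), (U k + U (m + 2 - k - 2))
      = ∑ k ∈ Icc θ m, (U k + U (m - k)) :=
    sum_congr (by simp) fun k _ => by rw [Nat.sub_right_comm, Nat.add_sub_cancel]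
  rw [hrec (m + 2) (by omega), hsum,
    show ((m + 2 : ℕ) : ℚ) - θ - 1 = (m : ℚ) + 1 - θ by push_cast; ring]
  field_simp
  ring

theorem quasi_random_recurrence_general (θ : ℕ) (U : ℕ → ℚ)
    (h0 : ∀ n : ℕ, n ≤ θ + 1 → U n = 0)
    (hrec : ∀ n : ℕ, θ + 2 ≤ n →
      U n = 1 + (1 / ((n : ℚ) - θ - 1)) *
        ∑ k ∈ Finset.Icc θ (n - 2), (U k + U (n - k - 2))) :
    ∀ n : ℕ, θ + 1 ≤ n →
      ((n : ℚ) - θ) * U (n + 1)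
        = 1 + ((n : ℚ) - θ - 1) * U n + U (n - 1) + U (n - θ - 1) := by
  intro n hn
  obtain ⟨m, rfl⟩ : ∃ m, n = m + 1 := ⟨n - 1, by omega⟩
  have hm : θ ≤ m := by omega
  have hnext := mul_sub_one_eq_sum_of_rec θ U hrec hm
  rw [Nat.add_sub_cancel, Nat.sub_right_comm, Nat.add_sub_cancel]
  push_cast
  obtain rfl | hlt := hm.eq_or_lt
  · rw [Icc_self, sum_singleton, Nat.sub_self] at hnext
    rw [h0 (θ + 1) le_rfl, Nat.sub_self]
    linear_combination hnext
  · obtain ⟨l, rfl⟩ : ∃ l, m = l + 1 := ⟨m - 1, by omega⟩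
    have hprev := mul_sub_one_eq_sum_of_rec θ U hrec (m := l) (by omega)
    rw [sum_Icc_succ_add_reflect U (by omega), ← hprev] at hnext
    push_cast at hnext ⊢
    linear_combination hnext

/-- Fix `θ ≥ 1` and let `(U_n)` be the sequence of rationals with `U_n = 0` for
`n ≤ θ + 1` and `U_n = 1 + (1/(n − θ − 1)) Σ_{k=θ}^{n−2} (U_k + U_{n−k−2})` for
`n ≥ θ + 2` (the expected number of base pairs of a quasi-random saturated
structure). Then `(n − θ)U_{n+1} = 1 + (n − θ − 1)U_n + U_{n−1} + U_{n−θ−1}`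
for every `n ≥ θ + 1`. -/
theorem quasi_random_recurrence (θ : ℕ) (hθ : 1 ≤ θ) (U : ℕ → ℚ)
    (h0 : ∀ n : ℕ, n ≤ θ + 1 → U n = 0)
    (hrec : ∀ n : ℕ, θ + 2 ≤ n →
      U n = 1 + (1 / ((n : ℚ) - θ - 1)) *
        ∑ k ∈ Finset.Icc θ (n - 2), (U k + U (n - k - 2))) :
    ∀ n : ℕ, θ + 1 ≤ n →
      ((n : ℚ) - θ) * U (n + 1)
        = 1 + ((n : ℚ) - θ - 1) * U n + U (n - 1) + U (n - θ - 1) :=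
  quasi_random_recurrence_general θ U h0 hrec
end
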